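/- arXiv:1911.08671 — 3 statements merged into one kernel-verified Lean document; each statement's English description precedes it below -/
import Mathlib

section
/- Let (X,f) be a compact TDS, φ continuous, g a nonnegative mistake function (nondecreasing in n and in ε, with lim_{ε→0} lim_{n→∞} g(n,ε)/n = 0). Then for every Z ⊆ X, the Pesin pressure with mistake function equals the classical Pesin pressure: P_Z(φ,g) = P_Z(φ). -/
open Filter Topology
open scoped ENNReal

namespace Mistake

variable {X : Type*}

/-- Birkhoff sum `S_n φ(x) = ∑_{i<n} φ(T^i x)`. -/
noncomputable def birkhoff (T : X → X) (φ : X → ℝ) (n : ℕ) (x : X) : ℝ :=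
  ∑ i ∈ Finset.range n, φ (T^[i] x)

/-- Open Bowen ball. -/
def bowenBall [MetricSpace X] (T : X → X) (x : X) (n : ℕ) (ε : ℝ) : Set X :=
  {y | ∀ j < n, dist (T^[j] x) (T^[j] y) < ε}

/-- Closed Bowen ball. -/
def closedBowenBall [MetricSpace X] (T : X → X) (x : X) (n : ℕ) (ε : ℝ) : Set X :=
  {y | ∀ j < n, dist (T^[j] x) (T^[j] y) ≤ ε}

/-- Average-metric ball. -/
def avgBall [MetricSpace X] (T : X → X) (x : X) (n : ℕ) (ε : ℝ) : Set X :=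
  {y | (1 / n : ℝ) * ∑ i ∈ Finset.range n, dist (T^[i] x) (T^[i] y) < ε}

/-- Mistake Bowen ball with mistake function `g`. -/
def mistakeBall [MetricSpace X] (T : X → X) (g : ℕ → ℝ → ℝ) (x : X) (n : ℕ) (ε : ℝ) : Set X :=
  {y | ∃ Λ ⊆ Finset.range n, (((Finset.range n) \ Λ).card : ℝ) ≤ g n ε ∧
    ∀ j ∈ Λ, dist (T^[j] x) (T^[j] y) ≤ ε}

/-- `g` is a mistake function: nondecreasing in `n`, and the iterated limit
`lim_{ε→0⁺} lim_{n→∞} g(n,ε)/n = 0`. -/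
structure IsMistakeFunction (g : ℕ → ℝ → ℝ) : Prop where
  mono_n : ∀ n ε, g n ε ≤ g (n + 1) ε
  lim : ∃ L : ℝ → ℝ,
    (∀ ε > (0 : ℝ), Tendsto (fun n : ℕ => g n ε / n) atTop (𝓝 (L ε))) ∧
    Tendsto L (𝓝[>] (0 : ℝ)) (𝓝 0)

/-- Carathéodory set function: infimum over countable covers of `Z` by the balls
`B (xᵢ) nᵢ` with centers in `Z` and lengths `nᵢ ≥ N` of `∑ exp(-nᵢ s + S_{nᵢ}φ(xᵢ))`. -/
noncomputable def mOut (T : X → X) (φ : X → ℝ) (B : X → ℕ → Set X)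
    (Z : Set X) (s : ℝ) (N : ℕ) : ℝ≥0∞ :=
  ⨅ (c : ℕ → X × ℕ) (_ : (∀ i, (c i).1 ∈ Z ∧ N ≤ (c i).2) ∧
      Z ⊆ ⋃ i, B (c i).1 (c i).2),
    ∑' i, ENNReal.ofReal (Real.exp (-((c i).2 : ℝ) * s + birkhoff T φ (c i).2 (c i).1))

/-- The limit as `N → ∞` (the set function is nondecreasing in `N`). -/
noncomputable def mLimit (T : X → X) (φ : X → ℝ) (B : X → ℕ → Set X)
    (Z : Set X) (s : ℝ) : ℝ≥0∞ := ⨆ N, mOut T φ B Z s N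

/-- The critical exponent (pressure at a fixed scale). -/
noncomputable def presAt (T : X → X) (φ : X → ℝ) (B : X → ℕ → Set X) (Z : Set X) : ℝ :=
  sInf {s : ℝ | mLimit T φ B Z s = 0}

/-- The pressure: the limit of the critical exponents as the scale `δ → 0⁺`
(equal to the supremum over `δ > 0` by monotonicity). -/
noncomputable def pres (T : X → X) (φ : X → ℝ) (B : X → ℕ → ℝ → Set X) (Z : Set X) : ℝ :=
  sSup {p : ℝ | ∃ δ > (0 : ℝ), p = presAt T φ (fun x n => B x n δ) Z}

/-- Variant of `mOut` where the centers range over all of `X`. -/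
noncomputable def mOutX (T : X → X) (φ : X → ℝ) (B : X → ℕ → Set X)
    (Z : Set X) (s : ℝ) (N : ℕ) : ℝ≥0∞ :=
  ⨅ (c : ℕ → X × ℕ) (_ : (∀ i, N ≤ (c i).2) ∧ Z ⊆ ⋃ i, B (c i).1 (c i).2),
    ∑' i, ENNReal.ofReal (Real.exp (-((c i).2 : ℝ) * s + birkhoff T φ (c i).2 (c i).1))

noncomputable def presAtX (T : X → X) (φ : X → ℝ) (B : X → ℕ → Set X) (Z : Set X) : ℝ :=
  sInf {s : ℝ | (⨆ N, mOutX T φ B Z s N) = 0}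

noncomputable def presX (T : X → X) (φ : X → ℝ) (B : X → ℕ → ℝ → Set X) (Z : Set X) : ℝ :=
  sSup {p : ℝ | ∃ δ > (0 : ℝ), p = presAtX T φ (fun x n => B x n δ) Z}

/-- Diameter of a finite open cover. -/
noncomputable def coverDiam [MetricSpace X] (𝒰 : Finset (Set X)) : ℝ :=
  sSup (Metric.diam '' (𝒰 : Set (Set X)))

open Classical in
/-- Mistake cylinder: points tracked by some string over `𝒰` differing from `u`
in at most `budget` positions. -/
def mistakeCyl (f : X → X) (𝒰 : Finset (Set X)) (budget : ℝ) {m : ℕ}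
    (u : Fin m → Set X) : Set X :=
  {x | ∃ u' : Fin m → Set X, (∀ j, u' j ∈ 𝒰) ∧
    (((Finset.univ.filter fun j => u' j ≠ u j).card : ℝ) ≤ budget) ∧
    ∀ j : Fin m, f^[(j : ℕ)] x ∈ u' j}

/-- Open-cover set function with mistakes: infimum over countable covers of `Z`
by mistake cylinders of strings of length at least `N`. -/
noncomputable def mCover [MetricSpace X] (f : X → X) (φ : X → ℝ) (𝒰 : Finset (Set X))
    (g : ℕ → ℝ → ℝ) (Z : Set X) (s : ℝ) (N : ℕ) : ℝ≥0∞ :=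
  ⨅ (c : ℕ → Σ m : ℕ, Fin m → Set X)
    (_ : (∀ i, N ≤ (c i).1 ∧ ∀ j, (c i).2 j ∈ 𝒰) ∧
      Z ⊆ ⋃ i, mistakeCyl f 𝒰 (g (c i).1 (coverDiam 𝒰)) (c i).2),
    ∑' i, ENNReal.ofReal (Real.exp (-s * ((c i).1 : ℝ) +
      sSup (birkhoff f φ (c i).1 '' mistakeCyl f 𝒰 (g (c i).1 (coverDiam 𝒰)) (c i).2)))

/-- Open-cover pressure with mistakes for a fixed cover `𝒰`. -/
noncomputable def presCover [MetricSpace X] (f : X → X) (φ : X → ℝ) (𝒰 : Finset (Set X))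
    (g : ℕ → ℝ → ℝ) (Z : Set X) : ℝ :=
  sInf {s : ℝ | (⨆ N, mCover f φ 𝒰 g Z s N) = 0}

end Mistake

/-!
Bowen balls lie inside mistake balls, so at every scale the pressure with mistakes is at most the
classical one. Conversely, fix a finite `δ/2`-net `E` and let `g(n, ε) ≤ γ n`. A mistake ball
`B_n(g; x, ε)` is covered by the cells obtained by choosing at most `γ n` mistake times and
labelling each of them by a point of `E`; when `2ε < δ` each cell has Bowen diameter `< δ`, there
are at most `exp (n (γ log (#E / γ) + γ))` cells, and on a cell the Birkhoff sum exceeds `S_n φ(x)`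
by at most `n (v + 2γ ‖φ‖∞)`, where `v` is the oscillation of `φ` at scale `ε`. Refining a cover by
mistake balls into Bowen balls thus raises the critical exponent by an amount that tends to `0`
with `γ` and `ε`, and the mistake-function hypothesis lets us take both small.
-/

namespace Mistake

variable {X : Type*}

lemma sSup_eq_sSup_of_le_of_le_add {P Q : ℝ → ℝ} (h₁ : ∀ δ > 0, P δ ≤ Q δ)
    (h₂ : ∀ δ > 0, ∀ η > 0, ∃ ε > 0, Q δ ≤ P ε + η) :
    sSup {p | ∃ δ > (0 : ℝ), p = P δ} = sSup {p | ∃ δ > (0 : ℝ), p = Q δ} := by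
  have hP : {p | ∃ δ > (0 : ℝ), p = P δ}.Nonempty := ⟨_, 1, one_pos, rfl⟩
  have hQ : {p | ∃ δ > (0 : ℝ), p = Q δ}.Nonempty := ⟨_, 1, one_pos, rfl⟩
  by_cases hbdd : BddAbove {p | ∃ δ > (0 : ℝ), p = Q δ}
  · have hbddP : BddAbove {p | ∃ δ > (0 : ℝ), p = P δ} := by
      obtain ⟨b, hb⟩ := hbdd
      exact ⟨b, by rintro _ ⟨δ, hδ, rfl⟩; exact (h₁ δ hδ).trans (hb ⟨δ, hδ, rfl⟩)⟩
    refine le_antisymm (csSup_le hP ?_) (csSup_le hQ ?_)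
    · rintro _ ⟨δ, hδ, rfl⟩
      exact (h₁ δ hδ).trans (le_csSup hbdd ⟨δ, hδ, rfl⟩)
    · rintro _ ⟨δ, hδ, rfl⟩
      refine le_of_forall_pos_le_add fun η hη => ?_
      obtain ⟨ε, hε, h⟩ := h₂ δ hδ η hη
      linarith [le_csSup hbddP ⟨ε, hε, rfl⟩]
  · have hbddP : ¬ BddAbove {p | ∃ δ > (0 : ℝ), p = P δ} := by
      rintro ⟨b, hb⟩
      refine hbdd ⟨b + 1, ?_⟩
      rintro _ ⟨δ, hδ, rfl⟩
      obtain ⟨ε, hε, h⟩ := h₂ δ hδ 1 one_pos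
      linarith [hb ⟨ε, hε, rfl⟩]
    rw [Real.sSup_of_not_bddAbove hbdd, Real.sSup_of_not_bddAbove hbddP]

section Caratheodory

variable {T : X → X} {φ : X → ℝ} {Z : Set X}

lemma abs_birkhoff_le {C : ℝ} (hC : ∀ x, |φ x| ≤ C) (n : ℕ) (x : X) :
    |birkhoff T φ n x| ≤ n * C :=
  calc |birkhoff T φ n x| ≤ ∑ i ∈ Finset.range n, |φ (T^[i] x)| := Finset.abs_sum_le_sum_abs _ _
    _ ≤ ∑ _i ∈ Finset.range n, C := Finset.sum_le_sum fun i _ => hC _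
    _ = n * C := by simp

lemma mOut_mono {B : X → ℕ → Set X} {s : ℝ} {N N' : ℕ} (h : N ≤ N') :
    mOut T φ B Z s N ≤ mOut T φ B Z s N' :=
  le_iInf₂ fun c hc => iInf₂_le c ⟨fun i => ⟨(hc.1 i).1, h.trans (hc.1 i).2⟩, hc.2⟩

lemma mLimit_anti {B₁ B₂ : X → ℕ → Set X} (h : ∀ x n, B₁ x n ⊆ B₂ x n) (s : ℝ) :
    mLimit T φ B₂ Z s ≤ mLimit T φ B₁ Z s :=
  iSup_mono fun _ =>
    le_iInf₂ fun c hc => iInf₂_le c ⟨hc.1, hc.2.trans (Set.iUnion_mono fun _ => h _ _)⟩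

lemma mOut_le_tsum {ι : Type*} [Countable ι] [Infinite ι] {B : X → ℕ → Set X} {s : ℝ} {N : ℕ}
    (c : ι → X × ℕ) (hc : ∀ i, (c i).1 ∈ Z ∧ N ≤ (c i).2) (hZ : Z ⊆ ⋃ i, B (c i).1 (c i).2) :
    mOut T φ B Z s N ≤
      ∑' i, ENNReal.ofReal (Real.exp (-((c i).2 : ℝ) * s + birkhoff T φ (c i).2 (c i).1)) := by
  obtain ⟨e⟩ : Nonempty (ℕ ≃ ι) := inferInstance
  have hcover : Z ⊆ ⋃ m, B (c (e m)).1 (c (e m)).2 := by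
    refine hZ.trans (Set.iUnion_subset fun i => ?_)
    simpa using Set.subset_iUnion (fun m => B (c (e m)).1 (c (e m)).2) (e.symm i)
  exact (iInf₂_le (c ∘ e) ⟨fun m => hc (e m), hcover⟩).trans_eq (e.tsum_eq fun i =>
    ENNReal.ofReal (Real.exp (-((c i).2 : ℝ) * s + birkhoff T φ (c i).2 (c i).1)))

lemma one_le_mOut {C s : ℝ} (hC : ∀ x, |φ x| ≤ C) (B : X → ℕ → Set X) (hs : s ≤ -C) (N : ℕ) :
    1 ≤ mOut T φ B Z s N := by
  refine le_iInf₂ fun c _ => (ENNReal.le_tsum 0).trans' ?_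
  rw [ENNReal.one_le_ofReal]
  refine Real.one_le_exp ?_
  have hS := (abs_le.1 (abs_birkhoff_le (T := T) hC (c 0).2 (c 0).1)).1
  nlinarith [mul_nonneg (Nat.cast_nonneg (α := ℝ) (c 0).2) (show 0 ≤ -s - C by linarith)]

lemma bddBelow_setOf_mLimit_eq_zero {C : ℝ} (hC : ∀ x, |φ x| ≤ C) (B : X → ℕ → Set X) :
    BddBelow {s | mLimit T φ B Z s = 0} := by
  refine ⟨-C, fun s hs => le_of_not_gt fun hlt => ?_⟩
  have h := (one_le_mOut (Z := Z) hC B hlt.le 0).trans (le_iSup (fun N => mOut T φ B Z s N) 0)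
  exact absurd (h.trans_eq hs) (by simp)

lemma presAt_le_presAt_add {B₁ B₂ : X → ℕ → Set X} {τ : ℝ}
    (hbdd : BddBelow {s | mLimit T φ B₂ Z s = 0}) (hne : ∃ s, mLimit T φ B₁ Z s = 0)
    (h : ∀ s, mLimit T φ B₁ Z s = 0 → mLimit T φ B₂ Z (s + τ) = 0) :
    presAt T φ B₂ Z ≤ presAt T φ B₁ Z + τ := by
  rw [← sub_le_iff_le_add]
  exact le_csInf hne fun s hs => sub_le_iff_le_add.2 (csInf_le hbdd (h s hs))

-- No cover of `∅` has its centres in `∅`, so every critical exponent is the junk `sInf ∅ = 0`.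
lemma pres_empty (B : X → ℕ → ℝ → Set X) : pres T φ B ∅ = 0 := by
  have hpresAt : ∀ δ, presAt T φ (fun x n => B x n δ) ∅ = 0 := by
    intro δ
    have hempty : {s | mLimit T φ (fun x n => B x n δ) ∅ s = 0} = ∅ := by
      refine Set.eq_empty_of_forall_notMem fun s hs => ?_
      have htop : mOut T φ (fun x n => B x n δ) ∅ s 0 = ⊤ :=
        iInf₂_eq_top.2 fun c hc => absurd (hc.1 0).1 (Set.notMem_empty _)
      have h := (le_iSup (fun N => mOut T φ (fun x n => B x n δ) ∅ s N) 0).trans_eq hs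
      rw [htop] at h
      exact absurd h (by simp)
    rw [presAt, hempty, Real.sInf_empty]
  have hset : {p : ℝ | ∃ δ > (0 : ℝ), p = presAt T φ (fun x n => B x n δ) ∅} = {0} :=
    Set.eq_singleton_iff_unique_mem.2
      ⟨⟨1, one_pos, (hpresAt 1).symm⟩, fun p ⟨δ, _, hp⟩ => hp.trans (hpresAt δ)⟩
  rw [pres, hset, csSup_singleton]

def Refines (T : X → X) (φ : X → ℝ) (Z : Set X) (B₁ B₂ : X → ℕ → Set X) (N : ℕ) (a b : ℝ) :
    Prop :=
  ∀ x ∈ Z, ∀ n ≥ N, ∃ F : Finset X, F.Nonempty ∧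
    (∀ z ∈ F, z ∈ Z ∧ birkhoff T φ n z ≤ birkhoff T φ n x + n * b) ∧
    (F.card : ℝ) ≤ Real.exp (n * a) ∧ Z ∩ B₁ x n ⊆ ⋃ z ∈ F, B₂ z n

lemma sum_ofReal_exp_le {F : Finset X} {w : X → ℝ} {n a b s w₀ : ℝ}
    (hcard : (F.card : ℝ) ≤ Real.exp (n * a)) (hw : ∀ z ∈ F, w z ≤ w₀ + n * b) :
    ∑ z ∈ F, ENNReal.ofReal (Real.exp (-n * (s + (a + b)) + w z)) ≤
      ENNReal.ofReal (Real.exp (-n * s + w₀)) := by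
  rw [← ENNReal.ofReal_sum_of_nonneg fun _ _ => (Real.exp_pos _).le]
  refine ENNReal.ofReal_le_ofReal ?_
  calc ∑ z ∈ F, Real.exp (-n * (s + (a + b)) + w z)
      ≤ ∑ _z ∈ F, Real.exp (-n * (s + a) + w₀) :=
        Finset.sum_le_sum fun z hz => Real.exp_le_exp.2 (by linarith [hw z hz])
    _ = F.card * Real.exp (-n * (s + a) + w₀) := by rw [Finset.sum_const, nsmul_eq_mul]
    _ ≤ Real.exp (n * a) * Real.exp (-n * (s + a) + w₀) :=
        mul_le_mul_of_nonneg_right hcard (Real.exp_pos _).le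
    _ = Real.exp (-n * s + w₀) := by rw [← Real.exp_add]; ring_nf

lemma mOut_le_of_refines {B₁ B₂ : X → ℕ → Set X} {N₀ N : ℕ} {a b : ℝ}
    (h : Refines T φ Z B₁ B₂ N₀ a b) (hN : N₀ ≤ N) (s : ℝ) :
    mOut T φ B₂ Z (s + (a + b)) N ≤ mOut T φ B₁ Z s N := by
  refine le_iInf₂ fun c hc => ?_
  choose F hFne hFZ hFcard hFcov using
    fun i => h (c i).1 (hc.1 i).1 (c i).2 (hN.trans (hc.1 i).2)
  have : ∀ i, Nonempty (F i) := fun i => (hFne i).to_subtype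
  have hcover : Z ⊆ ⋃ p : Σ i, F i, B₂ p.2 (c p.1).2 := by
    intro y hy
    obtain ⟨i, hi⟩ := Set.mem_iUnion.1 (hc.2 hy)
    obtain ⟨z, hz, hyz⟩ := Set.mem_iUnion₂.1 (hFcov i ⟨hy, hi⟩)
    exact Set.mem_iUnion.2 ⟨⟨i, z, hz⟩, hyz⟩
  set t : X × ℕ → ℝ≥0∞ := fun p => ENNReal.ofReal
    (Real.exp (-(p.2 : ℝ) * (s + (a + b)) + birkhoff T φ p.2 p.1))
  have hsigma : ∑' p : Σ i, F i, t (p.2, (c p.1).2) = ∑' i, ∑ z ∈ F i, t (z, (c i).2) := by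
    rw [ENNReal.tsum_sigma']
    exact tsum_congr fun i => Finset.tsum_subtype (F i) fun z => t (z, (c i).2)
  calc mOut T φ B₂ Z (s + (a + b)) N ≤ ∑' p : Σ i, F i, t (p.2, (c p.1).2) :=
        mOut_le_tsum (fun p : Σ i, F i => ((p.2 : X), (c p.1).2))
          (fun p => ⟨(hFZ _ _ p.2.2).1, (hc.1 _).2⟩) hcover
    _ = ∑' i, ∑ z ∈ F i, t (z, (c i).2) := hsigma
    _ ≤ ∑' i, ENNReal.ofReal (Real.exp (-((c i).2 : ℝ) * s + birkhoff T φ (c i).2 (c i).1)) :=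
        ENNReal.tsum_le_tsum fun i => sum_ofReal_exp_le (n := (c i).2) (w := birkhoff T φ (c i).2)
          (hFcard i) fun z hz => (hFZ i z hz).2

lemma mLimit_eq_zero_of_refines {B₁ B₂ : X → ℕ → Set X} {N₀ : ℕ} {a b s : ℝ}
    (h : Refines T φ Z B₁ B₂ N₀ a b) (hs : mLimit T φ B₁ Z s = 0) :
    mLimit T φ B₂ Z (s + (a + b)) = 0 := by
  refine ENNReal.iSup_eq_zero.2 fun N => le_antisymm ?_ zero_le
  calc mOut T φ B₂ Z (s + (a + b)) N ≤ mOut T φ B₂ Z (s + (a + b)) (max N N₀) :=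
        mOut_mono (le_max_left _ _)
    _ ≤ mOut T φ B₁ Z s (max N N₀) := mOut_le_of_refines h (le_max_right _ _) s
    _ ≤ mLimit T φ B₁ Z s := le_iSup (fun N => mOut T φ B₁ Z s N) _
    _ = 0 := hs

lemma mLimit_univ_eq_zero {C s : ℝ} (hC : ∀ x, |φ x| ≤ C) (hCs : C < s) (hZ : Z.Nonempty) :
    mLimit T φ (fun _ _ => Set.univ) Z s = 0 := by
  obtain ⟨z, hz⟩ := hZ
  set r := ENNReal.ofReal (Real.exp (C - s))
  have hr : r < 1 := by
    rw [ENNReal.ofReal_lt_one]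
    exact Real.exp_lt_one_iff.2 (by linarith)
  have hterm : ∀ n : ℕ, ENNReal.ofReal (Real.exp (-(n : ℝ) * s + birkhoff T φ n z)) ≤ r ^ n := by
    intro n
    rw [← ENNReal.ofReal_pow (Real.exp_pos _).le, ← Real.exp_nat_mul]
    refine ENNReal.ofReal_le_ofReal (Real.exp_le_exp.2 ?_)
    linarith [(abs_le.1 (abs_birkhoff_le (T := T) hC n z)).2]
  have hbound : ∀ N M, N ≤ M → mOut T φ (fun _ _ => Set.univ) Z s N ≤ r ^ M * (1 - r)⁻¹ := by
    intro N M hM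
    calc mOut T φ (fun _ _ => Set.univ) Z s N
        ≤ ∑' m : ℕ, ENNReal.ofReal (Real.exp (-((M + m : ℕ) : ℝ) * s + birkhoff T φ (M + m) z)) :=
          mOut_le_tsum (fun m => (z, M + m)) (fun m => ⟨hz, by omega⟩)
            fun y _ => Set.mem_iUnion.2 ⟨0, trivial⟩
      _ ≤ ∑' m : ℕ, r ^ M * r ^ m :=
          ENNReal.tsum_le_tsum fun m => (hterm _).trans_eq (pow_add _ _ _)
      _ = r ^ M * (1 - r)⁻¹ := by rw [ENNReal.tsum_mul_left, ENNReal.tsum_geometric]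
  have hlim : Tendsto (fun M => r ^ M * (1 - r)⁻¹) atTop (𝓝 0) := by
    simpa using ENNReal.Tendsto.mul_const (ENNReal.tendsto_pow_atTop_nhds_zero_of_lt_one hr)
      (Or.inr (ENNReal.inv_ne_top.2 (tsub_pos_of_lt hr).ne'))
  exact ENNReal.iSup_eq_zero.2 fun N =>
    le_antisymm (ge_of_tendsto hlim (eventually_atTop.2 ⟨N, hbound N⟩)) zero_le

end Caratheodory

def cellIndex (n G : ℕ) (E : Finset X) : Finset (Σ D : Finset ℕ, ∀ j ∈ D, X) :=
  ((Finset.range n).powerset.filter (·.card ≤ G)).sigma fun D => D.pi fun _ => E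

lemma card_cellIndex_mul_pow_le {n G : ℕ} {E : Finset X} {γ : ℝ} (hγ0 : 0 < γ) (hγ1 : γ ≤ 1)
    (hE : E.Nonempty) :
    ((cellIndex n G E).card : ℝ) * γ ^ G ≤ (E.card : ℝ) ^ G * (1 + γ) ^ n := by
  have hK : (1 : ℝ) ≤ E.card := by exact_mod_cast hE.card_pos
  have hterm : ∀ D ∈ (Finset.range n).powerset.filter (·.card ≤ G),
      ((D.pi fun _ => E).card : ℝ) * γ ^ G ≤ (E.card : ℝ) ^ G * γ ^ D.card := by
    intro D hD
    have hDG := (Finset.mem_filter.1 hD).2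
    rw [Finset.card_pi, Finset.prod_const, Nat.cast_pow, ← Nat.sub_add_cancel hDG, pow_add,
      pow_add]
    have : γ ^ (G - D.card) ≤ (E.card : ℝ) ^ (G - D.card) :=
      (pow_le_one₀ hγ0.le hγ1).trans (one_le_pow₀ hK)
    calc (E.card : ℝ) ^ D.card * (γ ^ (G - D.card) * γ ^ D.card)
        ≤ (E.card : ℝ) ^ D.card * ((E.card : ℝ) ^ (G - D.card) * γ ^ D.card) := by gcongr
      _ = _ := by ring
  calc ((cellIndex n G E).card : ℝ) * γ ^ G
      = ∑ D ∈ (Finset.range n).powerset.filter (·.card ≤ G),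
          ((D.pi fun _ => E).card : ℝ) * γ ^ G := by
        rw [cellIndex, Finset.card_sigma, Nat.cast_sum, Finset.sum_mul]
    _ ≤ ∑ D ∈ (Finset.range n).powerset, (E.card : ℝ) ^ G * γ ^ D.card :=
        (Finset.sum_le_sum hterm).trans (Finset.sum_le_sum_of_subset_of_nonneg
          (Finset.filter_subset _ _) fun _ _ _ => by positivity)
    _ = (E.card : ℝ) ^ G * (1 + γ) ^ n := by
        rw [← Finset.mul_sum, add_comm, ← Finset.card_range n, ← Finset.sum_pow_mul_eq_add_pow]
        simp

lemma card_cellIndex_le_exp {n G : ℕ} {E : Finset X} {γ : ℝ} (hγ0 : 0 < γ) (hγ1 : γ ≤ 1)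
    (hE : E.Nonempty) (hG : (G : ℝ) ≤ γ * n) :
    ((cellIndex n G E).card : ℝ) ≤
      Real.exp (n * (γ * Real.log E.card + Real.negMulLog γ + γ)) := by
  have hK : (1 : ℝ) ≤ E.card := by exact_mod_cast hE.card_pos
  have hKγ : 1 ≤ (E.card : ℝ) / γ := (one_le_div hγ0).2 (hγ1.trans hK)
  have hcard : ((cellIndex n G E).card : ℝ) ≤ ((E.card : ℝ) / γ) ^ G * (1 + γ) ^ n := by
    rw [div_pow, div_mul_eq_mul_div, le_div_iff₀ (pow_pos hγ0 G)]
    exact card_cellIndex_mul_pow_le hγ0 hγ1 hE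
  have h₁ : ((E.card : ℝ) / γ) ^ G ≤ Real.exp (γ * n * Real.log ((E.card : ℝ) / γ)) := by
    rw [← Real.rpow_natCast, Real.rpow_def_of_pos (by positivity), mul_comm]
    exact Real.exp_le_exp.2 (mul_le_mul_of_nonneg_right hG (Real.log_nonneg hKγ))
  have h₂ : (1 + γ) ^ n ≤ Real.exp (n * γ) := by
    rw [Real.exp_nat_mul]
    exact pow_le_pow_left₀ (by positivity) (by linarith [Real.add_one_le_exp γ]) n
  calc ((cellIndex n G E).card : ℝ) ≤ ((E.card : ℝ) / γ) ^ G * (1 + γ) ^ n := hcard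
    _ ≤ Real.exp (γ * n * Real.log ((E.card : ℝ) / γ)) * Real.exp (n * γ) :=
        mul_le_mul h₁ h₂ (by positivity) (Real.exp_pos _).le
    _ = Real.exp (n * (γ * Real.log E.card + Real.negMulLog γ + γ)) := by
        rw [← Real.exp_add, Real.log_div (by positivity) hγ0.ne', Real.negMulLog]
        ring_nf

section Metric

variable [MetricSpace X] {T : X → X} {φ : X → ℝ} {Z : Set X}

lemma exists_finset_forall_exists_dist_lt [CompactSpace X] {r : ℝ} (hr : 0 < r) :
    ∃ E : Finset X, ∀ y, ∃ e ∈ E, dist y e < r := by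
  obtain ⟨E, -, hE, hcov⟩ := finite_cover_balls_of_compact (isCompact_univ (X := X)) hr
  exact ⟨hE.toFinset, fun y => by simpa using hcov (Set.mem_univ y)⟩

lemma exists_finset_subset_iUnion_bowenBall {ι : Type*} (I : Finset ι) (S : ι → Set X)
    {A : Set X} {n : ℕ} {δ : ℝ} (hA : Z ∩ A ⊆ ⋃ i ∈ I, S i)
    (hS : ∀ i ∈ I, ∀ y ∈ S i, ∀ z ∈ S i, ∀ j < n, dist (T^[j] y) (T^[j] z) < δ) :
    ∃ F : Finset X, F.card ≤ I.card ∧ (∀ z ∈ F, z ∈ Z ∧ ∃ i ∈ I, z ∈ S i) ∧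
      Z ∩ A ⊆ ⋃ z ∈ F, bowenBall T z n δ := by
  classical
  set I' := I.filter fun i => (Z ∩ S i).Nonempty
  have hI' : ∀ i : I', (Z ∩ S i).Nonempty := fun i => (Finset.mem_filter.1 i.2).2
  refine ⟨I'.attach.image fun i => (hI' i).choose, ?_, ?_, ?_⟩
  · exact Finset.card_image_le.trans (Finset.card_attach.trans_le (Finset.card_filter_le _ _))
  · simp only [Finset.mem_image]
    rintro _ ⟨i, -, rfl⟩
    exact ⟨(hI' i).choose_spec.1, i, (Finset.mem_filter.1 i.2).1, (hI' i).choose_spec.2⟩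
  · intro y hy
    obtain ⟨i, hi, hyi⟩ := Set.mem_iUnion₂.1 (hA hy)
    have hi' : i ∈ I' := Finset.mem_filter.2 ⟨hi, y, hy.1, hyi⟩
    exact Set.mem_iUnion₂.2 ⟨_, Finset.mem_image_of_mem _ (Finset.mem_attach _ ⟨i, hi'⟩),
      fun j hj => hS i hi _ (hI' ⟨i, hi'⟩).choose_spec.2 y hyi j hj⟩

lemma refines_univ_bowenBall {C δ : ℝ} {E : Finset X} (hC : ∀ x, |φ x| ≤ C)
    (hE : ∀ y, ∃ e ∈ E, dist y e < δ / 2) :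
    Refines T φ Z (fun _ _ => Set.univ) (fun x n => bowenBall T x n δ) 0 (Real.log E.card)
      (2 * C) := by
  intro x hx n _
  have hcover : Z ∩ Set.univ ⊆ ⋃ u ∈ Fintype.piFinset fun _ : Fin n => E,
      {z | ∀ j : Fin n, dist (T^[j] z) (u j) < δ / 2} := by
    intro y _
    choose u hu hyu using fun j : Fin n => hE (T^[j] y)
    exact Set.mem_iUnion₂.2 ⟨u, Fintype.mem_piFinset.2 hu, hyu⟩
  obtain ⟨F, hFcard, hFZ, hcov⟩ := exists_finset_subset_iUnion_bowenBall (T := T) _ _ hcover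
    fun u _ y hy z hz j hj =>
      calc dist (T^[j] y) (T^[j] z) ≤ dist (T^[j] y) (u ⟨j, hj⟩) + dist (T^[j] z) (u ⟨j, hj⟩) :=
            dist_triangle_right _ _ _
        _ < δ / 2 + δ / 2 := add_lt_add (hy ⟨j, hj⟩) (hz ⟨j, hj⟩)
        _ = δ := add_halves δ
  obtain ⟨z₀, hz₀, -⟩ := Set.mem_iUnion₂.1 (hcov ⟨hx, trivial⟩)
  have hK : (0 : ℝ) < E.card := by
    obtain ⟨e, he, -⟩ := hE x
    exact_mod_cast Finset.card_pos.2 ⟨e, he⟩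
  refine ⟨F, ⟨z₀, hz₀⟩, fun z hz => ⟨(hFZ z hz).1, ?_⟩, ?_, hcov⟩
  · linarith [(abs_le.1 (abs_birkhoff_le (T := T) hC n z)).2,
      (abs_le.1 (abs_birkhoff_le (T := T) hC n x)).1]
  · calc (F.card : ℝ) ≤ (E.card : ℝ) ^ n := by exact_mod_cast hFcard.trans_eq (by simp)
      _ = Real.exp (n * Real.log E.card) := by
        rw [← Real.exp_log (pow_pos hK n), Real.log_pow]

lemma exists_mLimit_bowenBall_eq_zero [CompactSpace X] {C δ : ℝ} (hC : ∀ x, |φ x| ≤ C)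
    (hZ : Z.Nonempty) (hδ : 0 < δ) : ∃ s, mLimit T φ (fun x n => bowenBall T x n δ) Z s = 0 := by
  obtain ⟨E, hE⟩ := exists_finset_forall_exists_dist_lt (X := X) (half_pos hδ)
  exact ⟨_, mLimit_eq_zero_of_refines (refines_univ_bowenBall hC hE)
    (mLimit_univ_eq_zero hC (lt_add_one C) hZ)⟩

lemma bowenBall_subset_mistakeBall {g : ℕ → ℝ → ℝ} {x : X} {n : ℕ} {ε : ℝ} (hg : 0 ≤ g n ε) :
    bowenBall T x n ε ⊆ mistakeBall T g x n ε :=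
  fun _ hy => ⟨Finset.range n, subset_rfl, by simpa using hg,
    fun j hj => (hy j (Finset.mem_range.1 hj)).le⟩

lemma mem_mistakeBall_self {g : ℕ → ℝ → ℝ} {x : X} {n : ℕ} {ε : ℝ} (hg : 0 ≤ g n ε)
    (hε : 0 < ε) : x ∈ mistakeBall T g x n ε :=
  bowenBall_subset_mistakeBall hg fun j _ => by simpa using hε

def trackingCell (T : X → X) (x : X) (n : ℕ) (ε r : ℝ) (p : Σ D : Finset ℕ, ∀ j ∈ D, X) :
    Set X :=
  {z | (∀ j < n, j ∉ p.1 → dist (T^[j] x) (T^[j] z) ≤ ε) ∧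
    ∀ j (hj : j ∈ p.1), dist (T^[j] z) (p.2 j hj) < r}

lemma mistakeBall_subset_iUnion_trackingCell {g : ℕ → ℝ → ℝ} {x : X} {n : ℕ} {ε r : ℝ}
    {E : Finset X} (hE : ∀ y, ∃ e ∈ E, dist y e < r) :
    mistakeBall T g x n ε ⊆
      ⋃ p ∈ cellIndex n ⌊g n ε⌋₊ E, trackingCell T x n ε r p := by
  rintro y ⟨Λ, -, hcard, hdist⟩
  have hmem : ∀ {j}, j < n → j ∉ Finset.range n \ Λ → j ∈ Λ := fun hj hjD => by
    by_contra hjΛ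
    exact hjD (Finset.mem_sdiff.2 ⟨Finset.mem_range.2 hj, hjΛ⟩)
  refine Set.mem_iUnion₂.2 ⟨⟨Finset.range n \ Λ, fun j _ => (hE (T^[j] y)).choose⟩, ?_, ?_, ?_⟩
  · simp only [cellIndex, Finset.mem_sigma, Finset.mem_filter, Finset.mem_powerset, Finset.mem_pi]
    exact ⟨⟨Finset.sdiff_subset, Nat.le_floor hcard⟩, fun j _ => (hE (T^[j] y)).choose_spec.1⟩
  · exact fun j hj hjD => hdist j (hmem hj hjD)
  · exact fun j _ => (hE (T^[j] y)).choose_spec.2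

lemma dist_lt_of_mem_trackingCell {x y z : X} {n j : ℕ} {ε δ : ℝ}
    {p : Σ D : Finset ℕ, ∀ j ∈ D, X} (hεδ : 2 * ε < δ)
    (hy : y ∈ trackingCell T x n ε (δ / 2) p) (hz : z ∈ trackingCell T x n ε (δ / 2) p)
    (hj : j < n) : dist (T^[j] y) (T^[j] z) < δ := by
  by_cases hjD : j ∈ p.1
  · calc dist (T^[j] y) (T^[j] z) ≤ dist (T^[j] y) (p.2 j hjD) + dist (T^[j] z) (p.2 j hjD) :=
          dist_triangle_right _ _ _
      _ < δ / 2 + δ / 2 := add_lt_add (hy.2 j hjD) (hz.2 j hjD)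
      _ = δ := add_halves δ
  · calc dist (T^[j] y) (T^[j] z) ≤ dist (T^[j] x) (T^[j] y) + dist (T^[j] x) (T^[j] z) :=
          dist_triangle_left _ _ _
      _ ≤ ε + ε := add_le_add (hy.1 j hj hjD) (hz.1 j hj hjD)
      _ < δ := by linarith

lemma birkhoff_le_of_mem_trackingCell {x z : X} {n : ℕ} {ε r C v : ℝ}
    {p : Σ D : Finset ℕ, ∀ j ∈ D, X} (hC : ∀ y, |φ y| ≤ C)
    (hv : ∀ a b, dist a b ≤ ε → dist (φ a) (φ b) ≤ v) (hv0 : 0 ≤ v)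
    (hz : z ∈ trackingCell T x n ε r p) :
    birkhoff T φ n z ≤ birkhoff T φ n x + n * v + 2 * C * p.1.card := by
  have hC0 : 0 ≤ C := (abs_nonneg _).trans (hC z)
  have hterm : ∀ j ∈ Finset.range n,
      φ (T^[j] z) - φ (T^[j] x) ≤ v + if j ∈ p.1 then 2 * C else 0 := by
    intro j hj
    split_ifs with hjD
    · linarith [(abs_le.1 (hC (T^[j] z))).2, (abs_le.1 (hC (T^[j] x))).1]
    · have := hv _ _ (hz.1 j (Finset.mem_range.1 hj) hjD)
      rw [Real.dist_eq] at this
      linarith [(abs_le.1 this).1]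
  have hcard : ((Finset.range n ∩ p.1).card : ℝ) ≤ p.1.card := by
    exact_mod_cast Finset.card_le_card Finset.inter_subset_right
  have hsum := Finset.sum_le_sum hterm
  rw [Finset.sum_sub_distrib, Finset.sum_add_distrib, Finset.sum_ite_mem, Finset.sum_const,
    Finset.sum_const, Finset.card_range, nsmul_eq_mul, nsmul_eq_mul] at hsum
  unfold birkhoff
  nlinarith

lemma refines_mistakeBall_bowenBall {g : ℕ → ℝ → ℝ} {C v ε δ γ : ℝ} {E : Finset X} {N : ℕ}
    (hC : ∀ y, |φ y| ≤ C) (hv : ∀ a b, dist a b ≤ ε → dist (φ a) (φ b) ≤ v) (hv0 : 0 ≤ v)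
    (hE : ∀ y, ∃ e ∈ E, dist y e < δ / 2) (hε : 0 < ε) (hεδ : 2 * ε < δ)
    (hγ0 : 0 < γ) (hγ1 : γ ≤ 1) (hg : ∀ n ≥ N, 0 ≤ g n ε ∧ g n ε ≤ γ * n) :
    Refines T φ Z (fun x n => mistakeBall T g x n ε) (fun x n => bowenBall T x n δ) N
      (γ * Real.log E.card + Real.negMulLog γ + γ) (v + 2 * C * γ) := by
  intro x hx n hn
  obtain ⟨hg0, hgγ⟩ := hg n hn
  have hG : (⌊g n ε⌋₊ : ℝ) ≤ γ * n := (Nat.floor_le hg0).trans hgγ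
  obtain ⟨F, hFcard, hFZ, hcov⟩ := exists_finset_subset_iUnion_bowenBall
    (cellIndex n ⌊g n ε⌋₊ E) (trackingCell T x n ε (δ / 2))
    (Set.inter_subset_right.trans (mistakeBall_subset_iUnion_trackingCell hE))
    fun _ _ y hy z hz j hj => dist_lt_of_mem_trackingCell hεδ hy hz hj
  obtain ⟨z₀, hz₀, -⟩ := Set.mem_iUnion₂.1 (hcov ⟨hx, mem_mistakeBall_self hg0 hε⟩)
  have hC0 : 0 ≤ C := (abs_nonneg _).trans (hC x)
  refine ⟨F, ⟨z₀, hz₀⟩, fun z hz => ?_, ?_, hcov⟩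
  · obtain ⟨hzZ, p, hp, hzp⟩ := hFZ z hz
    have hpG : (p.1.card : ℝ) ≤ γ * n := by
      simp only [cellIndex, Finset.mem_sigma, Finset.mem_filter] at hp
      exact (Nat.cast_le.2 hp.1.2).trans hG
    refine ⟨hzZ, (birkhoff_le_of_mem_trackingCell hC hv hv0 hzp).trans ?_⟩
    nlinarith
  · obtain ⟨e, he, -⟩ := hE x
    exact (Nat.cast_le.2 hFcard).trans (card_cellIndex_le_exp hγ0 hγ1 ⟨e, he⟩ hG)

lemma mLimit_mistakeBall_le {g : ℕ → ℝ → ℝ} (hg0 : ∀ n ε, 0 ≤ g n ε) (δ s : ℝ) :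
    mLimit T φ (fun x n => mistakeBall T g x n δ) Z s ≤
      mLimit T φ (fun x n => bowenBall T x n δ) Z s :=
  mLimit_anti (fun _ n => bowenBall_subset_mistakeBall (hg0 n δ)) s

lemma presAt_mistakeBall_le [CompactSpace X] {g : ℕ → ℝ → ℝ} {C δ : ℝ}
    (hg0 : ∀ n ε, 0 ≤ g n ε) (hC : ∀ x, |φ x| ≤ C) (hZ : Z.Nonempty) (hδ : 0 < δ) :
    presAt T φ (fun x n => mistakeBall T g x n δ) Z ≤
      presAt T φ (fun x n => bowenBall T x n δ) Z := by
  simpa using presAt_le_presAt_add (τ := 0) (bddBelow_setOf_mLimit_eq_zero hC _)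
    (exists_mLimit_bowenBall_eq_zero hC hZ hδ) fun s hs => by
      rw [add_zero]
      exact le_antisymm ((mLimit_mistakeBall_le hg0 δ s).trans_eq hs) zero_le

lemma exists_presAt_bowenBall_le [CompactSpace X] {g : ℕ → ℝ → ℝ} {C δ η : ℝ}
    (hφ : Continuous φ) (hg : IsMistakeFunction g) (hg0 : ∀ n ε, 0 ≤ g n ε)
    (hC : ∀ x, |φ x| ≤ C) (hZ : Z.Nonempty) (hδ : 0 < δ) (hη : 0 < η) :
    ∃ ε > 0, presAt T φ (fun x n => bowenBall T x n δ) Z ≤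
      presAt T φ (fun x n => mistakeBall T g x n ε) Z + η := by
  obtain ⟨E, hE⟩ := exists_finset_forall_exists_dist_lt (X := X) (half_pos hδ)
  set a : ℝ → ℝ := fun γ => γ * Real.log E.card + Real.negMulLog γ + γ
  obtain ⟨γ, hγη, hγ1, hγ0⟩ : ∃ γ, a γ + 2 * C * γ < η / 2 ∧ γ ≤ 1 ∧ 0 < γ := by
    have hcont : Continuous fun γ => a γ + 2 * C * γ := by fun_prop
    have hlim := (hcont.tendsto' 0 0 (by simp [a])).mono_left (nhdsWithin_le_nhds (s := Set.Ioi 0))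
    exact ((hlim.eventually (eventually_lt_nhds (half_pos hη))).and
      (((eventually_le_nhds one_pos).filter_mono nhdsWithin_le_nhds).and
        self_mem_nhdsWithin)).exists
  obtain ⟨ε₁, hε₁, hv⟩ := Metric.uniformContinuous_iff.1
    (CompactSpace.uniformContinuous_of_continuous hφ) (η / 2) (half_pos hη)
  obtain ⟨L, hL, hL0⟩ := hg.lim
  obtain ⟨ε, hLε, hεmin, hε⟩ : ∃ ε, L ε < γ ∧ ε < min ε₁ (δ / 2) ∧ 0 < ε :=
    ((hL0.eventually (eventually_lt_nhds hγ0)).and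
      (((eventually_lt_nhds (lt_min hε₁ (half_pos hδ))).filter_mono nhdsWithin_le_nhds).and
        self_mem_nhdsWithin)).exists
  obtain ⟨N, hN⟩ := eventually_atTop.1
    (((hL ε hε).eventually (eventually_lt_nhds hLε)).and (eventually_gt_atTop 0))
  have href := refines_mistakeBall_bowenBall (T := T) (Z := Z) hC
    (fun _ _ h => (hv (h.trans_lt (hεmin.trans_le (min_le_left _ _)))).le) (half_pos hη).le hE
    hε (by linarith [hεmin.trans_le (min_le_right _ _)]) hγ0 hγ1
    fun n hn => ⟨hg0 n ε, by
      have hn0 : (0 : ℝ) < n := by exact_mod_cast (hN n hn).2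
      exact ((div_lt_iff₀ hn0).1 (hN n hn).1).le⟩
  refine ⟨ε, hε, ?_⟩
  have hne : ∃ s, mLimit T φ (fun x n => mistakeBall T g x n ε) Z s = 0 := by
    obtain ⟨s, hs⟩ := exists_mLimit_bowenBall_eq_zero (T := T) hC hZ hε
    exact ⟨s, le_antisymm ((mLimit_mistakeBall_le hg0 ε s).trans_eq hs) zero_le⟩
  calc presAt T φ (fun x n => bowenBall T x n δ) Z
      ≤ presAt T φ (fun x n => mistakeBall T g x n ε) Z + (a γ + (η / 2 + 2 * C * γ)) :=
        presAt_le_presAt_add (bddBelow_setOf_mLimit_eq_zero hC _) hne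
          fun s hs => mLimit_eq_zero_of_refines href hs
    _ ≤ presAt T φ (fun x n => mistakeBall T g x n ε) Z + η := by linarith

end Metric

end Mistake

open Mistake in
theorem stmt14_general {X : Type*} [MetricSpace X] [CompactSpace X] (f : X → X)
    (φ : X → ℝ) (hφ : Continuous φ)
    (g : ℕ → ℝ → ℝ) (hg : Mistake.IsMistakeFunction g) (hg0 : ∀ n ε, 0 ≤ g n ε)
    (Z : Set X) :
    pres f φ (fun x n δ => mistakeBall f g x n δ) Z =
      pres f φ (fun x n δ => bowenBall f x n δ) Z := by
  rcases Z.eq_empty_or_nonempty with rfl | hZ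
  · rw [pres_empty, pres_empty]
  obtain ⟨C, hC⟩ := (isCompact_range (continuous_abs.comp hφ)).bddAbove
  exact sSup_eq_sSup_of_le_of_le_add
    (fun δ hδ => presAt_mistakeBall_le hg0 (fun x => hC ⟨x, rfl⟩) hZ hδ)
    (fun δ hδ η hη => exists_presAt_bowenBall_le hφ hg hg0 (fun x => hC ⟨x, rfl⟩) hZ hδ hη)

open Mistake in
/-- main theorem: the Pesin pressure with a mistake function equals
the classical Pesin pressure on every subset `Z`. -/
theorem stmt14 {X : Type*} [MetricSpace X] [CompactSpace X] (f : X → X)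
    (hf : Continuous f) (φ : X → ℝ) (hφ : Continuous φ)
    (g : ℕ → ℝ → ℝ) (hg : Mistake.IsMistakeFunction g) (hg0 : ∀ n ε, 0 ≤ g n ε)
    (hge : ∀ n : ℕ, ∀ ε₁ ε₂ : ℝ, 0 < ε₁ → ε₁ ≤ ε₂ → g n ε₁ ≤ g n ε₂)
    (Z : Set X) :
    pres f φ (fun x n δ => mistakeBall f g x n δ) Z =
      pres f φ (fun x n δ => bowenBall f x n δ) Z :=
  stmt14_general f φ hφ g hg hg0 Z
end

section
/- Let (X,f) be a compact TDS and φ continuous. For every Z ⊆ X, the Pesin pressure defined using average-metric balls B_{d̄_n}(x,δ) in place of Bowen balls equals the classical Pesin pressure: P_Z^{avg}(φ) = P_Z(φ). -/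
open Filter Topology
open scoped ENNReal

namespace Stmt15Aux
set_option linter.unusedSectionVars false
set_option maxHeartbeats 1000000
open Mistake

section

variable {X : Type*} [MetricSpace X] (f : X → X) (φ : X → ℝ)

lemma bowen_subset_avg {x : X} {n : ℕ} {δ : ℝ} (hδ : 0 < δ) :
    bowenBall f x n δ ⊆ avgBall f x n δ := by
  intro y hy
  rcases Nat.eq_zero_or_pos n with rfl | hn
  · simp [avgBall, hδ]
  · have hsum : ∑ i ∈ Finset.range n, dist (f^[i] x) (f^[i] y) < n * δ := by
      calc ∑ i ∈ Finset.range n, dist (f^[i] x) (f^[i] y)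
          < ∑ _i ∈ Finset.range n, δ := by
            apply Finset.sum_lt_sum_of_nonempty (by simpa using hn.ne')
            intro i hi; exact hy i (Finset.mem_range.mp hi)
        _ = n * δ := by simp [mul_comm]
    have hn' : (0:ℝ) < n := by exact_mod_cast hn
    simp only [avgBall, Set.mem_setOf_eq]
    rw [div_mul_eq_mul_div, one_mul, div_lt_iff₀ hn']
    linarith [hsum]

lemma mOut_anti_ball {B₁ B₂ : X → ℕ → Set X} (h : ∀ x n, B₂ x n ⊆ B₁ x n)
    (Z : Set X) (s : ℝ) (N : ℕ) : mOut f φ B₁ Z s N ≤ mOut f φ B₂ Z s N := by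
  refine le_iInf₂ fun c hc => ?_
  exact iInf₂_le c ⟨hc.1, hc.2.trans (Set.iUnion_mono fun i => h _ _)⟩

lemma mOut_mono_N {B : X → ℕ → Set X} {Z : Set X} {s : ℝ} {N N' : ℕ} (h : N ≤ N') :
    mOut f φ B Z s N ≤ mOut f φ B Z s N' := by
  refine le_iInf₂ fun c hc => ?_
  exact iInf₂_le c ⟨fun i => ⟨(hc.1 i).1, h.trans (hc.1 i).2⟩, hc.2⟩

lemma mOut_anti_s {B : X → ℕ → Set X} {Z : Set X} {N : ℕ} (hN : 1 ≤ N) {s s' : ℝ}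
    (h : s ≤ s') : mOut f φ B Z s' N ≤ mOut f φ B Z s N := by
  refine le_iInf₂ fun c hc => ?_
  refine (iInf₂_le c hc).trans (ENNReal.tsum_le_tsum fun i => ?_)
  apply ENNReal.ofReal_le_ofReal
  apply Real.exp_le_exp.mpr
  have hn : (1:ℝ) ≤ ((c i).2 : ℝ) := by exact_mod_cast hN.trans (hc.1 i).2
  nlinarith

lemma mLimit_eq_zero_iff {B : X → ℕ → Set X} {Z : Set X} {s : ℝ} :
    mLimit f φ B Z s = 0 ↔ ∀ N, mOut f φ B Z s N = 0 := by
  simp [mLimit, ENNReal.iSup_eq_zero]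

lemma mLimit_zero_mono {B : X → ℕ → Set X} {Z : Set X} {s s' : ℝ} (h : s ≤ s')
    (h0 : mLimit f φ B Z s = 0) : mLimit f φ B Z s' = 0 := by
  rw [mLimit_eq_zero_iff] at h0 ⊢
  intro N
  have h1 : mOut f φ B Z s' N ≤ mOut f φ B Z s' (max N 1) := mOut_mono_N f φ (le_max_left _ _)
  have h2 : mOut f φ B Z s' (max N 1) ≤ mOut f φ B Z s (max N 1) :=
    mOut_anti_s f φ (le_max_right _ _) h
  exact le_antisymm (h1.trans (h2.trans_eq (h0 _))) (zero_le)

lemma mLimit_anti_ball {B₁ B₂ : X → ℕ → Set X} (h : ∀ x n, B₂ x n ⊆ B₁ x n)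
    (Z : Set X) (s : ℝ) : mLimit f φ B₁ Z s ≤ mLimit f φ B₂ Z s :=
  iSup_mono fun N => mOut_anti_ball f φ h Z s N


end

section

lemma sum_pow_cnt {β : Type*} [Fintype β] [DecidableEq β] (r : ℝ) (n : ℕ) :
    ∑ w : Fin n → Option β,
        r ^ (Finset.univ.filter fun j => (w j).isSome).card
      = (1 + Fintype.card β * r) ^ n := by
  induction n with
  | zero => simp
  | succ n ih =>
    rw [← Equiv.sum_comp (Fin.consEquiv (fun _ : Fin (n+1) => Option β))]
    have hsplit : ∀ p : Option β × (Fin n → Option β),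
        r ^ (Finset.univ.filter fun j =>
            ((Fin.consEquiv (fun _ : Fin (n+1) => Option β)) p j).isSome).card
          = (if p.1.isSome then r else 1) *
            r ^ (Finset.univ.filter fun j => (p.2 j).isSome).card := by
      rintro ⟨o, w⟩
      have hc : (Finset.univ.filter fun j =>
            ((Fin.consEquiv (fun _ : Fin (n+1) => Option β)) (o, w) j).isSome).card
          = (if o.isSome then 1 else 0)
            + (Finset.univ.filter fun j => (w j).isSome).card := by
        rw [Finset.card_filter, Fin.sum_univ_succ, Finset.card_filter]
        simp only [Fin.consEquiv_apply, Fin.cons_zero, Fin.cons_succ]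
      rw [hc]
      rcases o with _ | a
      · simp [pow_add]
      · simp [pow_add]
    simp_rw [hsplit]
    rw [Fintype.sum_prod_type]
    dsimp +instances only
    simp_rw [← Finset.mul_sum, ih]
    rw [Fintype.sum_option]
    simp only [Option.isSome_none, Option.isSome_some, if_true, if_false]
    rw [pow_succ]
    simp only [Finset.sum_const, Finset.card_univ, nsmul_eq_mul, if_false, Bool.false_eq_true]
    ring

lemma card_cnt_le {β : Type*} [Fintype β] [DecidableEq β] (hK : 1 ≤ Fintype.card β)
    {n m : ℕ} {t : ℝ} (ht0 : 0 < t) (ht1 : t ≤ 1) (hm : (m : ℝ) ≤ n * t) :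
    (Fintype.card {w : Fin n → Option β //
        (Finset.univ.filter fun j => (w j).isSome).card ≤ m} : ℝ)
      ≤ Real.exp (n * (t + t * Real.log (Fintype.card β / t))) := by
  have hK1 : (1:ℝ) ≤ (Fintype.card β : ℝ) := by exact_mod_cast hK
  set K : ℝ := (Fintype.card β : ℝ) with hKdef
  have hK0 : (0:ℝ) < K := by linarith
  set r : ℝ := t / K with hrdef
  have hr0 : 0 < r := div_pos ht0 hK0
  have hr1 : r ≤ 1 := by
    rw [hrdef, div_le_one hK0]; linarith
  have hKr : 1 + K * r = 1 + t := by
    rw [hrdef]; field_simp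
  have key : (Fintype.card {w : Fin n → Option β //
      (Finset.univ.filter fun j => (w j).isSome).card ≤ m} : ℝ) * r^m ≤ (1+t)^n := by
    rw [Fintype.card_subtype]
    calc ((Finset.univ.filter fun w : Fin n → Option β =>
            (Finset.univ.filter fun j => (w j).isSome).card ≤ m).card : ℝ) * r^m
        = ∑ _w ∈ (Finset.univ.filter fun w : Fin n → Option β =>
            (Finset.univ.filter fun j => (w j).isSome).card ≤ m), r^m := by
          rw [Finset.sum_const, nsmul_eq_mul]
      _ ≤ ∑ w ∈ (Finset.univ.filter fun w : Fin n → Option β =>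
            (Finset.univ.filter fun j => (w j).isSome).card ≤ m),
            r ^ (Finset.univ.filter fun j => (w j).isSome).card := by
          apply Finset.sum_le_sum
          intro w hw
          exact pow_le_pow_of_le_one hr0.le hr1 (Finset.mem_filter.mp hw).2
      _ ≤ ∑ w : Fin n → Option β, r ^ (Finset.univ.filter fun j => (w j).isSome).card := by
          apply Finset.sum_le_sum_of_subset_of_nonneg (Finset.filter_subset _ _)
          intro w _ _; positivity
      _ = (1+t)^n := by rw [sum_pow_cnt, ← hKdef, hKr]
  have hrm : 0 < r^m := by positivity
  have hcard : (Fintype.card {w : Fin n → Option β //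
      (Finset.univ.filter fun j => (w j).isSome).card ≤ m} : ℝ) ≤ (1+t)^n * (K/t)^m := by
    have hinv : (K/t)^m = (r^m)⁻¹ := by
      rw [hrdef, ← inv_pow, inv_div]
    rw [hinv, ← div_eq_mul_inv, le_div_iff₀ hrm]
    exact key
  refine hcard.trans ?_
  have hKt1 : (1:ℝ) ≤ K / t := by
    rw [le_div_iff₀ ht0]; linarith
  have h1 : (1+t)^n ≤ Real.exp (n * t) := by
    calc (1+t)^n ≤ (Real.exp t)^n := by
          apply pow_le_pow_left₀ (by linarith) _ n
          linarith [Real.add_one_le_exp t]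
      _ = Real.exp (n * t) := by rw [← Real.exp_nat_mul, mul_comm]
  have h2 : (K/t)^m ≤ Real.exp (n * (t * Real.log (K/t))) := by
    have hlog : 0 ≤ Real.log (K/t) := Real.log_nonneg hKt1
    calc (K/t)^m = Real.exp (Real.log (K/t))^m := by rw [Real.exp_log (by linarith)]
      _ = Real.exp (m * Real.log (K/t)) := by rw [← Real.exp_nat_mul, mul_comm]
      _ ≤ Real.exp (n * (t * Real.log (K/t))) := by
          apply Real.exp_le_exp.mpr
          rw [← mul_assoc]
          exact mul_le_mul_of_nonneg_right hm hlog
  calc (1+t)^n * (K/t)^m ≤ Real.exp (n*t) * Real.exp (n * (t * Real.log (K/t))) := by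
        apply mul_le_mul h1 h2 (by positivity) (Real.exp_nonneg _)
    _ = Real.exp (n * (t + t * Real.log (K/t))) := by
        rw [← Real.exp_add]; ring_nf


end

section

variable {X : Type*} [MetricSpace X]

lemma exists_net [CompactSpace X] (ε : ℝ) (hε : 0 < ε) :
    ∃ A : Finset X, ∀ x : X, ∃ a ∈ A, dist x a < ε := by
  obtain ⟨A, hA⟩ := isCompact_univ.elim_finite_subcover (fun a : X => Metric.ball a ε)
    (fun a => Metric.isOpen_ball) (fun x _ => Set.mem_iUnion.mpr ⟨x, Metric.mem_ball_self hε⟩)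
  refine ⟨A, fun x => ?_⟩
  have := hA (Set.mem_univ x)
  simp only [Set.mem_iUnion, Metric.mem_ball] at this
  obtain ⟨a, ha, hd⟩ := this
  exact ⟨a, ha, hd⟩

lemma exists_bound [CompactSpace X] (φ : X → ℝ) (hφ : Continuous φ) :
    ∃ C : ℝ, 0 ≤ C ∧ ∀ x, |φ x| ≤ C := by
  obtain ⟨C, hC⟩ := (isCompact_range (hφ.norm)).bddAbove
  refine ⟨max C 0, le_max_right _ _, fun x => ?_⟩
  have : ‖φ x‖ ≤ C := hC ⟨x, rfl⟩
  rw [Real.norm_eq_abs] at this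
  exact this.trans (le_max_left _ _)

lemma abs_birkhoff_le (f : X → X) (φ : X → ℝ) {C : ℝ} (hC : ∀ x, |φ x| ≤ C)
    (n : ℕ) (x : X) : |birkhoff f φ n x| ≤ n * C := by
  calc |birkhoff f φ n x| ≤ ∑ i ∈ Finset.range n, |φ (f^[i] x)| :=
        Finset.abs_sum_le_sum_abs _ _
    _ ≤ ∑ _i ∈ Finset.range n, C := Finset.sum_le_sum fun i _ => hC _
    _ = n * C := by simp [mul_comm]

lemma avg_sum_lt (f : X → X) {x y : X} {n : ℕ} (hn : 1 ≤ n) {δ : ℝ}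
    (hy : y ∈ avgBall f x n δ) :
    ∑ i ∈ Finset.range n, dist (f^[i] x) (f^[i] y) < n * δ := by
  have hn' : (0:ℝ) < n := by exact_mod_cast hn
  simp only [avgBall, Set.mem_setOf_eq] at hy
  rw [div_mul_eq_mul_div, one_mul, div_lt_iff₀ hn'] at hy
  linarith

/-- positions where the orbit of `y` is `ε`-far from that of `x` are few. -/
lemma bad_card_le (f : X → X) {x y : X} {n : ℕ} (hn : 1 ≤ n) {ε t : ℝ}
    (hε : 0 < ε) (hy : y ∈ avgBall f x n (t*ε)) :
    ((Finset.univ.filter fun j : Fin n => ¬ dist (f^[(j:ℕ)] x) (f^[(j:ℕ)] y) < ε).card : ℝ)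
      ≤ n * t := by
  have hsum := avg_sum_lt f hn hy
  set S := Finset.univ.filter fun j : Fin n => ¬ dist (f^[(j:ℕ)] x) (f^[(j:ℕ)] y) < ε with hS
  have h1 : (S.card : ℝ) * ε ≤ ∑ j ∈ S, dist (f^[(j:ℕ)] x) (f^[(j:ℕ)] y) := by
    calc (S.card : ℝ) * ε = ∑ _j ∈ S, ε := by rw [Finset.sum_const, nsmul_eq_mul]
      _ ≤ _ := Finset.sum_le_sum fun j hj => by
          have := (Finset.mem_filter.mp hj).2
          linarith [not_lt.mp this]
  have h2 : ∑ j ∈ S, dist (f^[(j:ℕ)] x) (f^[(j:ℕ)] y)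
      ≤ ∑ j : Fin n, dist (f^[(j:ℕ)] x) (f^[(j:ℕ)] y) :=
    Finset.sum_le_sum_of_subset_of_nonneg (Finset.filter_subset _ _)
      (fun _ _ _ => dist_nonneg)
  have h3 : ∑ j : Fin n, dist (f^[(j:ℕ)] x) (f^[(j:ℕ)] y)
      = ∑ i ∈ Finset.range n, dist (f^[i] x) (f^[i] y) :=
    Fin.sum_univ_eq_sum_range (fun i => dist (f^[i] x) (f^[i] y)) n
  have : (S.card : ℝ) * ε < n * (t * ε) := by
    calc (S.card : ℝ) * ε ≤ _ := h1
      _ ≤ _ := h2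
      _ = _ := h3
      _ < n * (t*ε) := hsum
  nlinarith

lemma birkhoff_avg_le (f : X → X) (φ : X → ℝ) {C η ε t : ℝ} (hC : 0 ≤ C) (hη : 0 ≤ η) (ht : 0 ≤ t)
    (hCb : ∀ x, |φ x| ≤ C) (hmod : ∀ u v : X, dist u v < ε → |φ u - φ v| ≤ η)
    (hε : 0 < ε) {x y : X} {n : ℕ} (hn : 1 ≤ n)
    (hy : y ∈ avgBall f x n (t*ε)) :
    birkhoff f φ n y ≤ birkhoff f φ n x + n * (η + 2*C*t) := by
  have hbad := bad_card_le f hn hε hy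
  have key : birkhoff f φ n y - birkhoff f φ n x
      ≤ ∑ j : Fin n, (if dist (f^[(j:ℕ)] x) (f^[(j:ℕ)] y) < ε then η else 2*C) := by
    rw [birkhoff, birkhoff, ← Finset.sum_sub_distrib,
      ← Fin.sum_univ_eq_sum_range (fun i => φ (f^[i] y) - φ (f^[i] x))]
    apply Finset.sum_le_sum
    intro j _
    by_cases h : dist (f^[(j:ℕ)] x) (f^[(j:ℕ)] y) < ε
    · simp only [h, if_true]
      have := hmod _ _ (dist_comm (f^[(j:ℕ)] x) (f^[(j:ℕ)] y) ▸ h)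
      calc φ (f^[(j:ℕ)] y) - φ (f^[(j:ℕ)] x) ≤ |φ (f^[(j:ℕ)] y) - φ (f^[(j:ℕ)] x)| :=
            le_abs_self _
        _ ≤ η := this
    · simp only [h, if_false]
      have h1 := hCb (f^[(j:ℕ)] y); have h2 := hCb (f^[(j:ℕ)] x)
      have := abs_le.mp h1; have := abs_le.mp h2
      cases abs_le.mp h1; cases abs_le.mp h2
      linarith [abs_le.mp h1, abs_le.mp h2]
  have hsplit : ∑ j : Fin n, (if dist (f^[(j:ℕ)] x) (f^[(j:ℕ)] y) < ε then η else 2*C)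
      ≤ n * η + 2*C*(n*t) := by
    rw [← Finset.sum_filter_add_sum_filter_not Finset.univ
      (fun j : Fin n => dist (f^[(j:ℕ)] x) (f^[(j:ℕ)] y) < ε)]
    have hA : ∑ j ∈ Finset.univ.filter (fun j : Fin n =>
        dist (f^[(j:ℕ)] x) (f^[(j:ℕ)] y) < ε),
        (if dist (f^[(j:ℕ)] x) (f^[(j:ℕ)] y) < ε then η else 2*C) ≤ n * η := by
      rw [Finset.sum_ite_of_true]
      · calc _ ≤ ((Finset.univ.filter (fun j : Fin n =>
            dist (f^[(j:ℕ)] x) (f^[(j:ℕ)] y) < ε)).card : ℝ) * η := by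
              rw [Finset.sum_const, nsmul_eq_mul]
          _ ≤ n * η := by
              apply mul_le_mul_of_nonneg_right _ hη
              calc ((Finset.univ.filter (fun j : Fin n =>
                  dist (f^[(j:ℕ)] x) (f^[(j:ℕ)] y) < ε)).card : ℝ)
                  ≤ (Finset.univ : Finset (Fin n)).card := by
                    exact_mod_cast Finset.card_filter_le _ _
                _ = n := by simp
      · intro j hj; exact (Finset.mem_filter.mp hj).2
    have hB : ∑ j ∈ Finset.univ.filter (fun j : Fin n =>
        ¬ dist (f^[(j:ℕ)] x) (f^[(j:ℕ)] y) < ε),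
        (if dist (f^[(j:ℕ)] x) (f^[(j:ℕ)] y) < ε then η else 2*C) ≤ 2*C*(n*t) := by
      rw [Finset.sum_ite_of_false]
      · calc _ = ((Finset.univ.filter (fun j : Fin n =>
            ¬ dist (f^[(j:ℕ)] x) (f^[(j:ℕ)] y) < ε)).card : ℝ) * (2*C) := by
              rw [Finset.sum_const, nsmul_eq_mul]
          _ ≤ (n*t) * (2*C) := mul_le_mul_of_nonneg_right hbad (by linarith)
          _ = 2*C*(n*t) := by ring
      · intro j hj; exact (Finset.mem_filter.mp hj).2
    linarith [hA, hB]
  linarith [key, hsplit]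


end

section
set_option maxHeartbeats 1000000

variable {X : Type*} [MetricSpace X]

def piece (f : X → X) (ε : ℝ) (x : X) {A : Finset X} {nn : ℕ}
    (w : Fin nn → Option {a : X // a ∈ A}) : Set X :=
  {y | ∀ j : Fin nn, (w j).elim (dist (f^[(j:ℕ)] x) (f^[(j:ℕ)] y) < ε)
      (fun a => dist (a:X) (f^[(j:ℕ)] y) < ε)}

lemma exists_pattern (f : X → X) {A : Finset X} {ε t : ℝ}
    (hA : ∀ x : X, ∃ a ∈ A, dist x a < ε) (hε : 0 < ε) (ht : 0 ≤ t)
    {x z : X} {n : ℕ} (hn : 1 ≤ n) (hz : z ∈ avgBall f x n (t*ε)) :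
    ∃ w : Fin n → Option {a : X // a ∈ A},
      (Finset.univ.filter fun j => (w j).isSome).card ≤ ⌊(n:ℝ)*t⌋₊ ∧
      z ∈ piece f ε x w := by
  classical
  refine ⟨fun j => if dist (f^[(j:ℕ)] x) (f^[(j:ℕ)] z) < ε then none
    else some ⟨(hA (f^[(j:ℕ)] z)).choose, (hA (f^[(j:ℕ)] z)).choose_spec.1⟩, ?_, ?_⟩
  · have hcard := bad_card_le f hn hε hz
    rw [Nat.le_floor_iff (by positivity)]
    refine le_trans ?_ hcard
    have : (Finset.univ.filter fun j : Fin n =>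
        (if dist (f^[(j:ℕ)] x) (f^[(j:ℕ)] z) < ε then (none : Option {a : X // a ∈ A})
          else some ⟨(hA (f^[(j:ℕ)] z)).choose, (hA (f^[(j:ℕ)] z)).choose_spec.1⟩).isSome)
        = (Finset.univ.filter fun j : Fin n => ¬ dist (f^[(j:ℕ)] x) (f^[(j:ℕ)] z) < ε) := by
      apply Finset.filter_congr
      intro j _
      by_cases h : dist (f^[(j:ℕ)] x) (f^[(j:ℕ)] z) < ε <;> simp [h]
    rw [this]
  · intro j
    by_cases h : dist (f^[(j:ℕ)] x) (f^[(j:ℕ)] z) < ε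
    · simp only [if_pos h, Option.elim_none]
      exact h
    · simp only [if_neg h, Option.elim_some]
      have := (hA (f^[(j:ℕ)] z)).choose_spec.2
      rw [dist_comm] at this
      exact this

lemma mem_bowen_of_piece (f : X → X) {ε : ℝ} {x y z : X} {A : Finset X} {nn : ℕ}
    {w : Fin nn → Option {a : X // a ∈ A}}
    (hy : y ∈ piece f ε x w) (hz : z ∈ piece f ε x w) :
    z ∈ bowenBall f y nn (2*ε) := by
  intro j hj
  have hyj := hy ⟨j, hj⟩
  have hzj := hz ⟨j, hj⟩
  rcases hw : w ⟨j, hj⟩ with _ | a <;> rw [hw] at hyj hzj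
  · simp only [Option.elim_none] at hyj hzj
    calc dist (f^[j] y) (f^[j] z) ≤ dist (f^[j] y) (f^[j] x) + dist (f^[j] x) (f^[j] z) :=
          dist_triangle _ _ _
      _ < 2*ε := by rw [dist_comm (f^[j] y)]; push_cast at hyj hzj ⊢; linarith
  · simp only [Option.elim_some] at hyj hzj
    calc dist (f^[j] y) (f^[j] z) ≤ dist (f^[j] y) (a:X) + dist (a:X) (f^[j] z) :=
          dist_triangle _ _ _
      _ < 2*ε := by rw [dist_comm (f^[j] y)]; linarith

lemma mOut_bowen_le_avg [CompactSpace X] (f : X → X) (φ : X → ℝ) (Z : Set X) (hZ : Z.Nonempty)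
    {ε η t C : ℝ} (hε : 0 < ε) (hη : 0 ≤ η) (ht0 : 0 < t) (ht1 : t ≤ 1)
    (hC : 0 ≤ C) (hCb : ∀ x, |φ x| ≤ C)
    (hmod : ∀ u v : X, dist u v < ε → |φ u - φ v| ≤ η)
    {A : Finset X} (hA : ∀ x : X, ∃ a ∈ A, dist x a < ε)
    (s : ℝ) (N : ℕ) (hN : 1 ≤ N) :
    mOut f φ (fun x n => bowenBall f x n (2*ε)) Z
        (s + (η + 2*C*t + t*(1 + Real.log (A.card / t)))) N
      ≤ mOut f φ (fun x n => avgBall f x n (t*ε)) Z s N := by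
  classical
  set E := η + 2*C*t + t*(1 + Real.log (A.card / t)) with hE
  refine le_iInf₂ fun c hc => ?_
  have hxZ : ∀ i, (c i).1 ∈ Z := fun i => (hc.1 i).1
  have hn1 : ∀ i, 1 ≤ (c i).2 := fun i => hN.trans (hc.1 i).2
  have hK : 1 ≤ A.card := by
    obtain ⟨z0, hz0⟩ := hZ
    obtain ⟨a, ha, _⟩ := hA z0
    exact Finset.card_pos.mpr ⟨a, ha⟩
  let W : ℕ → Type _ := fun i => {w : Fin (c i).2 → Option {a : X // a ∈ A} //
      (Finset.univ.filter fun j => (w j).isSome).card ≤ ⌊((c i).2 : ℝ) * t⌋₊}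
  let ctr : ∀ i, W i → X := fun i w =>
    if h : (piece f ε (c i).1 w.1 ∩ (Z ∩ avgBall f (c i).1 (c i).2 (t*ε))).Nonempty
    then h.choose else (c i).1
  have hctrZ : ∀ i w, ctr i w ∈ Z := by
    intro i w
    by_cases h : (piece f ε (c i).1 w.1 ∩ (Z ∩ avgBall f (c i).1 (c i).2 (t*ε))).Nonempty
    · simp only [ctr, dif_pos h]; exact h.choose_spec.2.1
    · simp only [ctr, dif_neg h]; exact hxZ i
  have hctrB : ∀ i w, birkhoff f φ (c i).2 (ctr i w)
      ≤ birkhoff f φ (c i).2 (c i).1 + ((c i).2 : ℝ) * (η + 2*C*t) := by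
    intro i w
    by_cases h : (piece f ε (c i).1 w.1 ∩ (Z ∩ avgBall f (c i).1 (c i).2 (t*ε))).Nonempty
    · simp only [ctr, dif_pos h]
      exact birkhoff_avg_le f φ hC hη ht0.le hCb hmod hε (hn1 i) h.choose_spec.2.2
    · simp only [ctr, dif_neg h]
      have h1 : (1:ℝ) ≤ ((c i).2 : ℝ) := by exact_mod_cast hn1 i
      have h2 : (0:ℝ) ≤ η + 2*C*t := by nlinarith
      nlinarith
  haveI hne : ∀ i, Nonempty (W i) := fun i => ⟨⟨fun _ => none, by simp⟩⟩
  haveI hinf : Infinite (Σ i : ℕ, W i) :=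
    Infinite.of_injective (fun i : ℕ => (⟨i, Classical.arbitrary (W i)⟩ : Σ i, W i))
      (fun a b h => congrArg Sigma.fst h)
  haveI : Encodable (Σ i : ℕ, W i) := Encodable.ofCountable _
  haveI : Denumerable (Σ i : ℕ, W i) := Denumerable.ofEncodableOfInfinite _
  let e := Denumerable.eqv (Σ i : ℕ, W i)
  let c' : ℕ → X × ℕ := fun k => (ctr (e.symm k).1 (e.symm k).2, (c (e.symm k).1).2)
  have hcond : (∀ k, (c' k).1 ∈ Z ∧ N ≤ (c' k).2) ∧
      Z ⊆ ⋃ k, bowenBall f (c' k).1 (c' k).2 (2*ε) := by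
    constructor
    · intro k; exact ⟨hctrZ _ _, (hc.1 _).2⟩
    · intro z hz
      obtain ⟨U, ⟨i, rfl⟩, hzi⟩ := hc.2 hz
      obtain ⟨w, hwc, hwp⟩ := exists_pattern f hA hε ht0.le (hn1 i) hzi
      have hnei : (piece f ε (c i).1 w ∩ (Z ∩ avgBall f (c i).1 (c i).2 (t*ε))).Nonempty :=
        ⟨z, hwp, hz, hzi⟩
      refine Set.mem_iUnion.mpr ⟨e ⟨i, ⟨w, hwc⟩⟩, ?_⟩
      have hsymm : e.symm (e ⟨i, ⟨w, hwc⟩⟩) = ⟨i, ⟨w, hwc⟩⟩ := e.symm_apply_apply _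
      have hkey : c' (e ⟨i, ⟨w, hwc⟩⟩) = (ctr i ⟨w, hwc⟩, (c i).2) := by
        show (ctr (e.symm (e ⟨i, ⟨w, hwc⟩⟩)).1 (e.symm (e ⟨i, ⟨w, hwc⟩⟩)).2,
          (c (e.symm (e ⟨i, ⟨w, hwc⟩⟩)).1).2) = _
        rw [hsymm]
      rw [hkey]
      have hctrp : ctr i ⟨w, hwc⟩ ∈ piece f ε (c i).1 w := by
        simp only [ctr, dif_pos hnei]
        exact hnei.choose_spec.1
      exact mem_bowen_of_piece f hctrp hwp
  refine le_trans (iInf₂_le c' hcond) ?_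
  have hrw : (∑' k : ℕ, ENNReal.ofReal (Real.exp (-(((c' k).2 : ℝ)) * (s+E) +
        birkhoff f φ (c' k).2 (c' k).1)))
      = ∑' p : Σ i : ℕ, W i, ENNReal.ofReal (Real.exp (-(((c p.1).2 : ℝ)) * (s+E) +
        birkhoff f φ (c p.1).2 (ctr p.1 p.2))) := by
    rw [← Equiv.tsum_eq e.symm (fun p : Σ i : ℕ, W i =>
      ENNReal.ofReal (Real.exp (-(((c p.1).2 : ℝ)) * (s+E) +
        birkhoff f φ (c p.1).2 (ctr p.1 p.2))))]
  rw [hrw, ENNReal.tsum_sigma']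
  apply ENNReal.tsum_le_tsum
  intro i
  -- per-i bound
  have hcardW : ((Fintype.card (W i) : ℝ)) ≤
      Real.exp (((c i).2 : ℝ) * (t + t * Real.log (A.card / t))) := by
    have := card_cnt_le (β := {a : X // a ∈ A}) (by rwa [Fintype.card_coe])
      ht0 ht1 (Nat.floor_le (by positivity) : (⌊((c i).2 : ℝ) * t⌋₊ : ℝ) ≤ ((c i).2 : ℝ) * t)
    rwa [Fintype.card_coe] at this
  calc ∑' w : W i, ENNReal.ofReal (Real.exp (-(((c i).2 : ℝ)) * (s+E) +
          birkhoff f φ (c i).2 (ctr i w)))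
      ≤ ∑' _w : W i, ENNReal.ofReal (Real.exp (-(((c i).2 : ℝ)) * (s+E) +
          birkhoff f φ (c i).2 (c i).1 + ((c i).2 : ℝ) * (η + 2*C*t))) := by
        apply ENNReal.tsum_le_tsum
        intro w
        apply ENNReal.ofReal_le_ofReal
        apply Real.exp_le_exp.mpr
        linarith [hctrB i w]
    _ = (Fintype.card (W i) : ℝ≥0∞) * ENNReal.ofReal (Real.exp (-(((c i).2 : ℝ)) * (s+E) +
          birkhoff f φ (c i).2 (c i).1 + ((c i).2 : ℝ) * (η + 2*C*t))) := by
        rw [tsum_fintype]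
        simp [Finset.sum_const, Finset.card_univ, nsmul_eq_mul]
    _ ≤ ENNReal.ofReal (Real.exp (((c i).2 : ℝ) * (t + t * Real.log (A.card / t)))) *
          ENNReal.ofReal (Real.exp (-(((c i).2 : ℝ)) * (s+E) +
          birkhoff f φ (c i).2 (c i).1 + ((c i).2 : ℝ) * (η + 2*C*t))) := by
        apply mul_le_mul_left
        rw [← ENNReal.ofReal_natCast]
        exact ENNReal.ofReal_le_ofReal hcardW
    _ = ENNReal.ofReal (Real.exp (-(((c i).2 : ℝ)) * s + birkhoff f φ (c i).2 (c i).1)) := by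
        rw [← ENNReal.ofReal_mul (Real.exp_nonneg _)]
        congr 1
        rw [← Real.exp_add]
        congr 1
        rw [hE]
        ring

end

section
set_option maxHeartbeats 1000000

variable {X : Type*} [MetricSpace X]

/-- For a compact space there is a finite `s` with `mLimit = 0` for Bowen balls. -/
lemma exists_mLimit_bowen_zero [CompactSpace X] (f : X → X) (φ : X → ℝ) {C : ℝ}
    (hCb : ∀ x, |φ x| ≤ C) (Z : Set X) (hZ : Z.Nonempty) {δ : ℝ} (hδ : 0 < δ) :
    ∃ s : ℝ, mLimit f φ (fun x n => bowenBall f x n δ) Z s = 0 := by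
  classical
  obtain ⟨A, hA⟩ := exists_net (X := X) (δ/2) (by linarith)
  obtain ⟨z0, hz0⟩ := hZ
  have hK : 1 ≤ A.card := by
    obtain ⟨a, ha, _⟩ := hA z0
    exact Finset.card_pos.mpr ⟨a, ha⟩
  have hK0 : (0:ℝ) < (A.card : ℝ) := by exact_mod_cast hK
  set s : ℝ := C + 1 + Real.log A.card with hs
  refine ⟨s, ?_⟩
  rw [mLimit_eq_zero_iff]
  -- first: a quantitative bound on mOut at level N
  have key : ∀ N : ℕ, mOut f φ (fun x n => bowenBall f x n δ) Z s N
      ≤ ENNReal.ofReal (Real.exp (-(N:ℝ))) * (1 - ENNReal.ofReal (Real.exp (-1)))⁻¹ := by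
    intro N
    -- the cylinder sets
    set Cyl : ∀ (n : ℕ), (Fin n → {a : X // a ∈ A}) → Set X :=
      fun n v => {x | ∀ j : Fin n, dist (f^[(j:ℕ)] x) ((v j : X)) < δ/2} with hCyl
    set ctr : ∀ (n : ℕ), (Fin n → {a : X // a ∈ A}) → X := fun n v =>
      if h : (Cyl n v ∩ Z).Nonempty then h.choose else z0 with hctr
    have hctrZ : ∀ n v, ctr n v ∈ Z := by
      intro n v
      by_cases h : (Cyl n v ∩ Z).Nonempty
      · simp only [ctr, dif_pos h]; exact h.choose_spec.2
      · simp only [ctr, dif_neg h]; exact hz0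
    haveI : ∀ k : ℕ, Nonempty (Fin (N+k) → {a : X // a ∈ A}) := by
      intro k
      obtain ⟨a, ha, _⟩ := hA z0
      exact ⟨fun _ => ⟨a, ha⟩⟩
    haveI hinf : Infinite (Σ k : ℕ, (Fin (N+k) → {a : X // a ∈ A})) :=
      Infinite.of_injective (fun k : ℕ =>
        (⟨k, Classical.arbitrary _⟩ : Σ k : ℕ, (Fin (N+k) → {a : X // a ∈ A})))
        (fun a b h => congrArg Sigma.fst h)
    haveI : Encodable (Σ k : ℕ, (Fin (N+k) → {a : X // a ∈ A})) := Encodable.ofCountable _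
    haveI : Denumerable (Σ k : ℕ, (Fin (N+k) → {a : X // a ∈ A})) :=
      Denumerable.ofEncodableOfInfinite _
    set e := Denumerable.eqv (Σ k : ℕ, (Fin (N+k) → {a : X // a ∈ A})) with he
    set c : ℕ → X × ℕ := fun i =>
      (ctr (N + (e.symm i).1) (e.symm i).2, N + (e.symm i).1) with hc
    have hcond : (∀ i, (c i).1 ∈ Z ∧ N ≤ (c i).2) ∧
        Z ⊆ ⋃ i, bowenBall f (c i).1 (c i).2 δ := by
      constructor
      · exact fun i => ⟨hctrZ _ _, Nat.le_add_right _ _⟩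
      · intro z hz
        set v : Fin (N+0) → {a : X // a ∈ A} := fun j =>
          ⟨(hA (f^[(j:ℕ)] z)).choose, (hA (f^[(j:ℕ)] z)).choose_spec.1⟩ with hv
        have hzC : z ∈ Cyl (N+0) v := by
          intro j
          exact (hA (f^[(j:ℕ)] z)).choose_spec.2
        have hne : (Cyl (N+0) v ∩ Z).Nonempty := ⟨z, hzC, hz⟩
        refine Set.mem_iUnion.mpr ⟨e ⟨0, v⟩, ?_⟩
        have hsymm : e.symm (e ⟨0, v⟩) = ⟨0, v⟩ := e.symm_apply_apply _
        have hkey : c (e ⟨0, v⟩) = (ctr (N+0) v, N+0) := by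
          show (ctr (N + (e.symm (e ⟨0, v⟩)).1) (e.symm (e ⟨0, v⟩)).2,
            N + (e.symm (e ⟨0, v⟩)).1) = _
          rw [hsymm]
        rw [hkey]
        have hctrC : ctr (N+0) v ∈ Cyl (N+0) v := by
          simp only [ctr, dif_pos hne]; exact hne.choose_spec.1
        intro j hj
        have h1 : dist (f^[j] (ctr (N+0) v)) ((v ⟨j, hj⟩ : X)) < δ/2 := hctrC ⟨j, hj⟩
        have h2 : dist (f^[j] z) ((v ⟨j, hj⟩ : X)) < δ/2 := hzC ⟨j, hj⟩
        have h2' : dist ((v ⟨j, hj⟩ : X)) (f^[j] z) < δ/2 := by rw [dist_comm]; exact h2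
        calc dist (f^[j] (ctr (N+0) v)) (f^[j] z)
            ≤ dist (f^[j] (ctr (N+0) v)) ((v ⟨j, hj⟩ : X)) + dist ((v ⟨j, hj⟩ : X)) (f^[j] z) :=
              dist_triangle _ _ _
          _ < δ := by linarith
    refine le_trans (iInf₂_le c hcond) ?_
    have hrw : (∑' i : ℕ, ENNReal.ofReal (Real.exp (-(((c i).2 : ℝ)) * s +
          birkhoff f φ (c i).2 (c i).1)))
        = ∑' p : Σ k : ℕ, (Fin (N+k) → {a : X // a ∈ A}),
            ENNReal.ofReal (Real.exp (-((N + p.1 : ℕ) : ℝ) * s +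
              birkhoff f φ (N + p.1) (ctr (N + p.1) p.2))) := by
      rw [← Equiv.tsum_eq e.symm (fun p : Σ k : ℕ, (Fin (N+k) → {a : X // a ∈ A}) =>
        ENNReal.ofReal (Real.exp (-((N + p.1 : ℕ) : ℝ) * s +
          birkhoff f φ (N + p.1) (ctr (N + p.1) p.2))))]
    rw [hrw, ENNReal.tsum_sigma']
    have hinner : ∀ k : ℕ, (∑' v : Fin (N+k) → {a : X // a ∈ A},
        ENNReal.ofReal (Real.exp (-((N + k : ℕ) : ℝ) * s +
          birkhoff f φ (N + k) (ctr (N + k) v))))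
        ≤ ENNReal.ofReal (Real.exp (-((N + k : ℕ) : ℝ))) := by
      intro k
      calc ∑' v : Fin (N+k) → {a : X // a ∈ A},
            ENNReal.ofReal (Real.exp (-((N + k : ℕ) : ℝ) * s +
              birkhoff f φ (N + k) (ctr (N + k) v)))
          ≤ ∑' _v : Fin (N+k) → {a : X // a ∈ A},
              ENNReal.ofReal (Real.exp (((N + k : ℕ) : ℝ) * (C - s))) := by
            apply ENNReal.tsum_le_tsum
            intro v
            apply ENNReal.ofReal_le_ofReal
            apply Real.exp_le_exp.mpr
            have hb := abs_le.mp (abs_birkhoff_le f φ hCb (N + k) (ctr (N + k) v))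
            have := hb.2
            nlinarith [hb.2]
        _ = (Fintype.card (Fin (N+k) → {a : X // a ∈ A}) : ℝ≥0∞) *
              ENNReal.ofReal (Real.exp (((N + k : ℕ) : ℝ) * (C - s))) := by
            rw [tsum_fintype]
            simp [Finset.sum_const, Finset.card_univ, nsmul_eq_mul]
        _ = ENNReal.ofReal ((A.card : ℝ)^(N+k) * Real.exp (((N + k : ℕ) : ℝ) * (C - s))) := by
            rw [Fintype.card_fun, Fintype.card_coe, Fintype.card_fin,
              ENNReal.ofReal_mul (by positivity)]
            congr 1
            rw [← ENNReal.ofReal_natCast]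
            congr 1
            push_cast
            ring
        _ = ENNReal.ofReal (Real.exp (-((N + k : ℕ) : ℝ))) := by
            congr 1
            have hKexp : (A.card : ℝ)^(N+k) = Real.exp (((N+k : ℕ) : ℝ) * Real.log A.card) := by
              rw [← Real.exp_log hK0, ← Real.exp_nat_mul]
              congr 1
              rw [Real.log_exp]
            rw [hKexp, ← Real.exp_add]
            congr 1
            rw [hs]
            ring
    calc ∑' k : ℕ, (∑' v : Fin (N+k) → {a : X // a ∈ A},
          ENNReal.ofReal (Real.exp (-((N + k : ℕ) : ℝ) * s +
            birkhoff f φ (N + k) (ctr (N + k) v))))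
        ≤ ∑' k : ℕ, ENNReal.ofReal (Real.exp (-((N + k : ℕ) : ℝ))) :=
          ENNReal.tsum_le_tsum hinner
      _ = ∑' k : ℕ, ENNReal.ofReal (Real.exp (-(N:ℝ))) * ENNReal.ofReal (Real.exp (-1)) ^ k := by
          congr 1
          funext k
          rw [← ENNReal.ofReal_pow (Real.exp_nonneg _), ← ENNReal.ofReal_mul (Real.exp_nonneg _)]
          congr 1
          rw [← Real.exp_nat_mul, ← Real.exp_add]
          congr 1
          push_cast
          ring
      _ = ENNReal.ofReal (Real.exp (-(N:ℝ))) * ∑' k : ℕ, ENNReal.ofReal (Real.exp (-1)) ^ k :=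
          ENNReal.tsum_mul_left
      _ = ENNReal.ofReal (Real.exp (-(N:ℝ))) * (1 - ENNReal.ofReal (Real.exp (-1)))⁻¹ := by
          rw [ENNReal.tsum_geometric]
  intro N
  have h2 : ∀ N' : ℕ, N ≤ N' → mOut f φ (fun x n => bowenBall f x n δ) Z s N
      ≤ ENNReal.ofReal (Real.exp (-(N':ℝ))) * (1 - ENNReal.ofReal (Real.exp (-1)))⁻¹ :=
    fun N' hN' => le_trans (mOut_mono_N f φ hN') (key N')
  have htend : Tendsto (fun N' : ℕ => ENNReal.ofReal (Real.exp (-(N':ℝ))) *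
      (1 - ENNReal.ofReal (Real.exp (-1)))⁻¹) atTop (𝓝 0) := by
    have h1 : Tendsto (fun N' : ℕ => Real.exp (-(N':ℝ))) atTop (𝓝 0) := by
      apply Real.tendsto_exp_atBot.comp
      exact tendsto_neg_atBot_iff.mpr tendsto_natCast_atTop_atTop
    have h2 : Tendsto (fun N' : ℕ => ENNReal.ofReal (Real.exp (-(N':ℝ)))) atTop (𝓝 0) := by
      rw [← ENNReal.ofReal_zero]
      exact (ENNReal.continuous_ofReal.tendsto 0).comp h1
    have hfin : (1 - ENNReal.ofReal (Real.exp (-1)))⁻¹ ≠ ⊤ := by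
      rw [Ne, ENNReal.inv_eq_top, tsub_eq_zero_iff_le]
      intro h
      have := ENNReal.one_le_ofReal.mp h
      have := Real.exp_lt_one_iff.mpr (by norm_num : (-1:ℝ) < 0)
      linarith
    simpa using ENNReal.Tendsto.mul_const h2 (Or.inr hfin)
  have : mOut f φ (fun x n => bowenBall f x n δ) Z s N ≤ 0 :=
    ge_of_tendsto htend (eventually_atTop.mpr ⟨N, h2⟩)
  exact le_antisymm this (zero_le)


end

section
set_option maxHeartbeats 1000000

variable {X : Type*} [MetricSpace X]

lemma zeroset_lb (f : X → X) (φ : X → ℝ) {C : ℝ} (hC : 0 ≤ C) (hCb : ∀ x, |φ x| ≤ C)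
    (B : X → ℕ → Set X) (Z : Set X) (hZ : Z.Nonempty) {s : ℝ}
    (h : mLimit f φ B Z s = 0) : -C - 1 ≤ s := by
  by_contra hlt
  push_neg at hlt
  have h1 : mOut f φ B Z s 1 = 0 := (mLimit_eq_zero_iff f φ).mp h 1
  have h2 : mOut f φ B Z s 1 < 1 := by rw [h1]; exact zero_lt_one
  rw [mOut] at h2
  obtain ⟨c, hcl⟩ := iInf_lt_iff.mp h2
  obtain ⟨hcond, hsum⟩ := iInf_lt_iff.mp hcl
  obtain ⟨z0, hz0⟩ := hZ
  obtain ⟨U, ⟨i, rfl⟩, _⟩ := hcond.2 hz0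
  have hn1 : (1:ℝ) ≤ ((c i).2 : ℝ) := by exact_mod_cast (hcond.1 i).2
  have hb := (abs_le.mp (abs_birkhoff_le f φ hCb (c i).2 (c i).1)).1
  have hterm : (1:ℝ≥0∞) ≤ ENNReal.ofReal (Real.exp (-(((c i).2 : ℝ)) * s +
      birkhoff f φ (c i).2 (c i).1)) := by
    rw [show (1:ℝ≥0∞) = ENNReal.ofReal (Real.exp 0) by simp]
    apply ENNReal.ofReal_le_ofReal
    apply Real.exp_le_exp.mpr
    nlinarith
  have hge : (1:ℝ≥0∞) ≤ ∑' i, ENNReal.ofReal (Real.exp (-(((c i).2 : ℝ)) * s +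
      birkhoff f φ (c i).2 (c i).1)) := hterm.trans (ENNReal.le_tsum i)
  exact absurd (lt_of_le_of_lt hge hsum) (lt_irrefl _)

lemma zeroset_bddBelow (f : X → X) (φ : X → ℝ) {C : ℝ} (hC : 0 ≤ C)
    (hCb : ∀ x, |φ x| ≤ C) (B : X → ℕ → Set X) (Z : Set X) (hZ : Z.Nonempty) :
    BddBelow {s : ℝ | mLimit f φ B Z s = 0} :=
  ⟨-C - 1, fun _ hs => zeroset_lb f φ hC hCb B Z hZ hs⟩

lemma zeroset_bowen_subset_avg (f : X → X) (φ : X → ℝ) (Z : Set X) {δ : ℝ} (hδ : 0 < δ) :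
    {s : ℝ | mLimit f φ (fun x n => bowenBall f x n δ) Z s = 0}
      ⊆ {s : ℝ | mLimit f φ (fun x n => avgBall f x n δ) Z s = 0} := by
  intro s hs
  have := mLimit_anti_ball f φ (fun x n => bowen_subset_avg f hδ (x := x) (n := n)) Z s
  exact le_antisymm (this.trans_eq hs) (zero_le)

lemma zeroset_avg_nonempty [CompactSpace X] (f : X → X) (φ : X → ℝ) {C : ℝ}
    (hCb : ∀ x, |φ x| ≤ C) (Z : Set X) (hZ : Z.Nonempty) {δ : ℝ} (hδ : 0 < δ) :
    {s : ℝ | mLimit f φ (fun x n => avgBall f x n δ) Z s = 0}.Nonempty := by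
  obtain ⟨s, hs⟩ := exists_mLimit_bowen_zero f φ hCb Z hZ hδ
  exact ⟨s, zeroset_bowen_subset_avg f φ Z hδ hs⟩

lemma presAt_easy [CompactSpace X] (f : X → X) (φ : X → ℝ) {C : ℝ} (hC : 0 ≤ C)
    (hCb : ∀ x, |φ x| ≤ C) (Z : Set X) (hZ : Z.Nonempty) {δ : ℝ} (hδ : 0 < δ) :
    presAt f φ (fun x n => avgBall f x n δ) Z ≤ presAt f φ (fun x n => bowenBall f x n δ) Z := by
  apply csInf_le_csInf
  · exact zeroset_bddBelow f φ hC hCb _ Z hZ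
  · obtain ⟨s, hs⟩ := exists_mLimit_bowen_zero f φ hCb Z hZ hδ
    exact ⟨s, hs⟩
  · exact zeroset_bowen_subset_avg f φ Z hδ

lemma presAt_bowen_anti [CompactSpace X] (f : X → X) (φ : X → ℝ) {C : ℝ} (hC : 0 ≤ C)
    (hCb : ∀ x, |φ x| ≤ C) (Z : Set X) (hZ : Z.Nonempty) {ρ ρ' : ℝ} (hρ' : 0 < ρ')
    (hρ : ρ' ≤ ρ) :
    presAt f φ (fun x n => bowenBall f x n ρ) Z
      ≤ presAt f φ (fun x n => bowenBall f x n ρ') Z := by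
  apply csInf_le_csInf
  · exact zeroset_bddBelow f φ hC hCb _ Z hZ
  · obtain ⟨s, hs⟩ := exists_mLimit_bowen_zero f φ hCb Z hZ hρ'
    exact ⟨s, hs⟩
  · intro s hs
    have hsub : ∀ (x : X) (n : ℕ), bowenBall f x n ρ' ⊆ bowenBall f x n ρ :=
      fun x n y hy j hj => lt_of_lt_of_le (hy j hj) hρ
    have := mLimit_anti_ball f φ hsub Z s
    exact le_antisymm (this.trans_eq hs) (zero_le)

lemma presAt_hard [CompactSpace X] (f : X → X) (φ : X → ℝ) (Z : Set X) (hZ : Z.Nonempty)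
    {ε η t C : ℝ} (hε : 0 < ε) (hη : 0 ≤ η) (ht0 : 0 < t) (ht1 : t ≤ 1)
    (hC : 0 ≤ C) (hCb : ∀ x, |φ x| ≤ C)
    (hmod : ∀ u v : X, dist u v < ε → |φ u - φ v| ≤ η)
    {A : Finset X} (hA : ∀ x : X, ∃ a ∈ A, dist x a < ε) :
    presAt f φ (fun x n => bowenBall f x n (2*ε)) Z
      ≤ presAt f φ (fun x n => avgBall f x n (t*ε)) Z
        + (η + 2*C*t + t*(1 + Real.log (A.card / t))) := by
  set E := η + 2*C*t + t*(1 + Real.log (A.card / t)) with hE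
  have hZAne := zeroset_avg_nonempty f φ hCb Z hZ (mul_pos ht0 hε)
  have hBB := zeroset_bddBelow f φ hC hCb (fun x n => bowenBall f x n (2*ε)) Z hZ
  have hmem : ∀ s ∈ {s : ℝ | mLimit f φ (fun x n => avgBall f x n (t*ε)) Z s = 0},
      mLimit f φ (fun x n => bowenBall f x n (2*ε)) Z (s + E) = 0 := by
    intro s hs
    rw [mLimit_eq_zero_iff]
    intro N
    have h1 := mOut_mono_N f φ (B := fun x n => bowenBall f x n (2*ε)) (Z := Z)
      (s := s + E) (le_max_left N 1)
    have h2 := mOut_bowen_le_avg f φ Z hZ hε hη ht0 ht1 hC hCb hmod hA s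
      (max N 1) (le_max_right N 1)
    have h3 : mOut f φ (fun x n => avgBall f x n (t*ε)) Z s (max N 1) = 0 :=
      (mLimit_eq_zero_iff f φ).mp hs (max N 1)
    exact le_antisymm ((h1.trans h2).trans_eq h3) (zero_le)
  have hub : ∀ s ∈ {s : ℝ | mLimit f φ (fun x n => avgBall f x n (t*ε)) Z s = 0},
      presAt f φ (fun x n => bowenBall f x n (2*ε)) Z - E ≤ s := by
    intro s hs
    have := csInf_le hBB (hmem s hs)
    rw [presAt]
    linarith
  have := le_csInf hZAne hub
  rw [presAt, presAt] at *
  linarith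


end

section
set_option maxHeartbeats 1000000

lemma tendsto_err (C K : ℝ) (hK : 1 ≤ K) :
    Tendsto (fun t : ℝ => 2*C*t + t*(1 + Real.log (K / t))) (𝓝[>] (0:ℝ)) (𝓝 0) := by
  have h1 : Tendsto (fun t : ℝ => t * (2*C + 1 + Real.log K)) (𝓝[>] (0:ℝ)) (𝓝 0) := by
    have := (continuous_id.mul (continuous_const :
      Continuous fun _ : ℝ => 2*C + 1 + Real.log K)).tendsto (0:ℝ)
    simpa [Pi.mul_def] using this.mono_left nhdsWithin_le_nhds
  have h2 : Tendsto (fun t : ℝ => -(Real.log t * t)) (𝓝[>] (0:ℝ)) (𝓝 0) := by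
    have h := tendsto_log_mul_rpow_nhdsGT_zero (one_pos)
    have h' : Tendsto (fun t : ℝ => Real.log t * t) (𝓝[>] (0:ℝ)) (𝓝 0) := by
      refine h.congr fun t => ?_
      rw [Real.rpow_one]
    simpa using h'.neg
  have hsum := h1.add h2
  rw [add_zero] at hsum
  refine Tendsto.congr' ?_ hsum
  filter_upwards [self_mem_nhdsWithin] with t ht
  have ht0 : (0:ℝ) < t := ht
  have hlog : Real.log (K / t) = Real.log K - Real.log t :=
    Real.log_div (by linarith) ht0.ne'
  rw [hlog]
  ring

lemma exists_t (C K θ : ℝ) (hK : 1 ≤ K) (hθ : 0 < θ) :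
    ∃ t : ℝ, 0 < t ∧ t ≤ 1 ∧ 2*C*t + t*(1 + Real.log (K / t)) ≤ θ := by
  have h := (tendsto_err C K hK).eventually (eventually_lt_nhds hθ)
  have h2 : ∀ᶠ t : ℝ in 𝓝[>] (0:ℝ), t ∈ Set.Ioc (0:ℝ) 1 :=
    Ioc_mem_nhdsGT_of_mem ⟨le_refl 0, one_pos⟩
  obtain ⟨t, ht1, ht2⟩ := (h.and h2).exists
  exact ⟨t, ht2.1, ht2.2, ht1.le⟩

variable {X : Type*} [MetricSpace X]

lemma presAt_compare [CompactSpace X] (f : X → X) (φ : X → ℝ) (hφ : Continuous φ)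
    {C : ℝ} (hC : 0 ≤ C) (hCb : ∀ x, |φ x| ≤ C) (Z : Set X) (hZ : Z.Nonempty)
    {θ ρ : ℝ} (hθ : 0 < θ) (hρ : 0 < ρ) :
    ∃ δ > (0:ℝ), presAt f φ (fun x n => bowenBall f x n ρ) Z
      ≤ presAt f φ (fun x n => avgBall f x n δ) Z + θ := by
  -- uniform continuity
  have huc : UniformContinuous φ := CompactSpace.uniformContinuous_of_continuous hφ
  obtain ⟨ε0, hε0, hmod0⟩ := Metric.uniformContinuous_iff.mp huc (θ/2) (by linarith)
  set ε := min (ρ/2) ε0 with hεdef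
  have hε : 0 < ε := lt_min (by linarith) hε0
  have hmod : ∀ u v : X, dist u v < ε → |φ u - φ v| ≤ θ/2 := by
    intro u v h
    have := hmod0 (lt_of_lt_of_le h (min_le_right _ _))
    rw [Real.dist_eq] at this
    exact this.le
  obtain ⟨A, hA⟩ := exists_net (X := X) ε hε
  have hK : 1 ≤ A.card := by
    obtain ⟨z0, hz0⟩ := hZ
    obtain ⟨a, ha, _⟩ := hA z0
    exact Finset.card_pos.mpr ⟨a, ha⟩
  obtain ⟨t, ht0, ht1, hterr⟩ := exists_t C A.card (θ/2) (by exact_mod_cast hK) (by linarith)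
  refine ⟨t * ε, mul_pos ht0 hε, ?_⟩
  have step1 : presAt f φ (fun x n => bowenBall f x n ρ) Z
      ≤ presAt f φ (fun x n => bowenBall f x n (2*ε)) Z := by
    apply presAt_bowen_anti f φ hC hCb Z hZ (by linarith)
    calc 2*ε ≤ 2*(ρ/2) := by
          have := min_le_left (ρ/2) ε0
          linarith
      _ = ρ := by ring
  have step2 := presAt_hard f φ Z hZ hε (by linarith : (0:ℝ) ≤ θ/2) ht0 ht1 hC hCb hmod hA
  have herr : θ/2 + (2*C*t + t*(1 + Real.log (A.card / t))) ≤ θ := by linarith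
  calc presAt f φ (fun x n => bowenBall f x n ρ) Z
      ≤ presAt f φ (fun x n => bowenBall f x n (2*ε)) Z := step1
    _ ≤ presAt f φ (fun x n => avgBall f x n (t*ε)) Z
        + (θ/2 + 2*C*t + t*(1 + Real.log (A.card / t))) := step2
    _ ≤ presAt f φ (fun x n => avgBall f x n (t*ε)) Z + θ := by linarith

-- empty case
lemma mOut_empty (f : X → X) (φ : X → ℝ) (B : X → ℕ → Set X) (s : ℝ) (N : ℕ) :
    mOut f φ B (∅ : Set X) s N = ⊤ := by
  refine le_antisymm le_top (le_iInf₂ fun c hc => ?_)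
  exact absurd ((hc.1 0).1) (Set.notMem_empty _)

lemma presAt_empty (f : X → X) (φ : X → ℝ) (B : X → ℕ → Set X) :
    presAt f φ B (∅ : Set X) = 0 := by
  have : {s : ℝ | mLimit f φ B (∅ : Set X) s = 0} = ∅ := by
    ext s
    simp only [Set.mem_setOf_eq, Set.mem_empty_iff_false, iff_false]
    rw [mLimit]
    intro h
    have := (ENNReal.iSup_eq_zero.mp h) 0
    rw [mOut_empty] at this
    exact absurd this (by simp)
  rw [presAt, this, Real.sInf_empty]

lemma pres_empty (f : X → X) (φ : X → ℝ) (B : X → ℕ → ℝ → Set X) :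
    pres f φ B (∅ : Set X) = 0 := by
  have : {p : ℝ | ∃ δ > (0:ℝ), p = presAt f φ (fun x n => B x n δ) (∅ : Set X)} = {0} := by
    ext p
    simp only [Set.mem_setOf_eq, Set.mem_singleton_iff]
    constructor
    · rintro ⟨δ, hδ, rfl⟩; exact presAt_empty f φ _
    · rintro rfl; exact ⟨1, one_pos, (presAt_empty f φ _).symm⟩
  rw [pres, this, csSup_singleton]


end

end Stmt15Aux

open Stmt15Aux

open Mistake in
/-- the Pesin pressure defined with average-metric balls equals the
classical Pesin pressure on every subset `Z`. -/
theorem stmt15 {X : Type*} [MetricSpace X] [CompactSpace X] (f : X → X)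
    (hf : Continuous f) (φ : X → ℝ) (hφ : Continuous φ) (Z : Set X) :
    pres f φ (fun x n δ => avgBall f x n δ) Z =
      pres f φ (fun x n δ => bowenBall f x n δ) Z := by
  rcases Z.eq_empty_or_nonempty with rfl | hZ
  · rw [pres_empty, pres_empty]
  · obtain ⟨C, hC0, hCb⟩ := exists_bound φ hφ
    show sSup {p : ℝ | ∃ δ > (0:ℝ), p = presAt f φ (fun x n => avgBall f x n δ) Z}
      = sSup {p : ℝ | ∃ δ > (0:ℝ), p = presAt f φ (fun x n => bowenBall f x n δ) Z}
    set SA := {p : ℝ | ∃ δ > (0:ℝ), p = presAt f φ (fun x n => avgBall f x n δ) Z} with hSA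
    set SB := {p : ℝ | ∃ δ > (0:ℝ), p = presAt f φ (fun x n => bowenBall f x n δ) Z} with hSB
    have hPAB : ∀ δ : ℝ, 0 < δ → presAt f φ (fun x n => avgBall f x n δ) Z
        ≤ presAt f φ (fun x n => bowenBall f x n δ) Z :=
      fun δ hδ => presAt_easy f φ hC0 hCb Z hZ hδ
    have hSAne : SA.Nonempty := ⟨_, 1, one_pos, rfl⟩
    have hSBne : SB.Nonempty := ⟨_, 1, one_pos, rfl⟩
    have hhard : ∀ p ∈ SB, ∀ θ : ℝ, 0 < θ → ∃ q ∈ SA, p ≤ q + θ := by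
      rintro p ⟨ρ, hρ, rfl⟩ θ hθ
      obtain ⟨δ, hδ, hle⟩ := presAt_compare f φ hφ hC0 hCb Z hZ hθ hρ
      exact ⟨_, ⟨δ, hδ, rfl⟩, hle⟩
    by_cases hbdd : BddAbove SB
    · have hbddA : BddAbove SA := by
        obtain ⟨b, hb⟩ := hbdd
        refine ⟨b, ?_⟩
        rintro p ⟨δ, hδ, rfl⟩
        exact (hPAB δ hδ).trans (hb ⟨δ, hδ, rfl⟩)
      apply le_antisymm
      · apply csSup_le hSAne
        rintro p ⟨δ, hδ, rfl⟩
        exact (hPAB δ hδ).trans (le_csSup hbdd ⟨δ, hδ, rfl⟩)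
      · apply csSup_le hSBne
        intro p hp
        have hθ : ∀ θ : ℝ, 0 < θ → p ≤ sSup SA + θ := by
          intro θ hθ
          obtain ⟨q, hq, hle⟩ := hhard p hp θ hθ
          have := le_csSup hbddA hq
          linarith
        exact le_of_forall_pos_le_add hθ
    · have hbddA : ¬ BddAbove SA := by
        rintro ⟨b, hb⟩
        apply hbdd
        refine ⟨b + 1, ?_⟩
        intro p hp
        obtain ⟨q, hq, hle⟩ := hhard p hp 1 one_pos
        have := hb hq
        linarith
      rw [Real.sSup_of_not_bddAbove hbddA, Real.sSup_of_not_bddAbove hbdd]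
end

section
/- Let 𝒰 be a finite open cover of X with Lebesgue number L > 0. For every x ∈ X, n ∈ ℕ, and mistake function g ≥ 0, there exists a string 𝐔 ∈ 𝒰^n such that the mistake Bowen ball B_n(g; x, L) is contained in the mistake cylinder Z(𝐔^g) (with mistake budget g(n, L)). -/
open Filter Topology
open scoped ENNReal

open Mistake in
/-- if `L` is a Lebesgue number of the finite open cover `𝒰`, then
every mistake Bowen ball `B_n(g;x,L)` is contained in some mistake cylinder. -/
theorem stmt18 {X : Type*} [MetricSpace X] [CompactSpace X] (f : X → X)
    (hf : Continuous f) (𝒰 : Finset (Set X)) (hUopen : ∀ U ∈ 𝒰, IsOpen U)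
    (hUcover : ⋃₀ (𝒰 : Set (Set X)) = Set.univ)
    (L : ℝ) (hL : 0 < L) (hLeb : ∀ x : X, ∃ U ∈ 𝒰, Metric.closedBall x L ⊆ U)
    (g : ℕ → ℝ → ℝ) (hg : Mistake.IsMistakeFunction g) (hg0 : ∀ n ε, 0 ≤ g n ε)
    (x : X) (n : ℕ) :
    ∃ u : Fin n → Set X, (∀ j, u j ∈ 𝒰) ∧
      mistakeBall f g x n L ⊆ mistakeCyl f 𝒰 (g n L) u := by
  classical
  choose U hU hUball using hLeb
  refine ⟨fun j => U (f^[(j : ℕ)] x), fun j => hU _, ?_⟩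
  intro y hy
  obtain ⟨Λ, hΛsub, hcard, hΛ⟩ := hy
  refine ⟨fun j => if (j : ℕ) ∈ Λ then U (f^[(j : ℕ)] x) else U (f^[(j : ℕ)] y),
    fun j => by dsimp only; split <;> exact hU _, ?_, ?_⟩
  · calc ((Finset.univ.filter fun j : Fin n =>
        (if (j : ℕ) ∈ Λ then U (f^[(j : ℕ)] x) else U (f^[(j : ℕ)] y)) ≠ U (f^[(j : ℕ)] x)).card : ℝ)
        ≤ ((Finset.range n \ Λ).card : ℝ) := by
          have : (Finset.univ.filter fun j : Fin n =>
              (if (j : ℕ) ∈ Λ then U (f^[(j : ℕ)] x) else U (f^[(j : ℕ)] y)) ≠ U (f^[(j : ℕ)] x)).card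
              ≤ (Finset.range n \ Λ).card := by
            refine Finset.card_le_card_of_injOn (fun j : Fin n => (j : ℕ)) ?_ ?_
            · intro j hj
              simp only [Finset.mem_coe, Finset.mem_filter, Finset.mem_univ, true_and] at hj
              simp only [Finset.mem_coe, Finset.mem_sdiff, Finset.mem_range]
              refine ⟨j.2, fun h => ?_⟩
              rw [if_pos h] at hj
              exact hj rfl
            · intro a _ b _ h; exact Fin.val_injective h
          exact_mod_cast this
      _ ≤ g n L := hcard
  · intro j
    by_cases h : (j : ℕ) ∈ Λ
    · show f^[(j:ℕ)] y ∈ if (j : ℕ) ∈ Λ then _ else _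
      rw [if_pos h]
      exact hUball _ (by simpa [dist_comm] using hΛ _ h)
    · show f^[(j:ℕ)] y ∈ if (j : ℕ) ∈ Λ then _ else _
      rw [if_neg h]
      exact hUball _ (Metric.mem_closedBall.2 (by simp [hL.le]))
end
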